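/- arXiv:math/9901148 — 4 statements merged into one kernel-verified Lean document; each statement's English description precedes it below -/
import Mathlib

section
/- Fix radii ρ_0, ρ_2 > 0 and angles Θ_{01}, Θ_{02}, Θ_{12} ∈ [0, π/2]. For a configuration of three mutually intersecting disks D_0, D_1, D_2 with radii ρ_0, ρ_1, ρ_2 and pairwise dihedral angles Θ_{ij}, let Φ_0(ρ_1) denote the angle of the triangle of centers at the center of D_0. Then Φ_0 is a (weakly) monotone nondecreasing function of ρ_1. -/
open Real

/-- Distance between centers of two disks of radii `a, b` meeting at dihedral
angle `θ`. -/
noncomputable def len (a b θ : ℝ) : ℝ := Real.sqrt (a ^ 2 + b ^ 2 + 2 * a * b * Real.cos θ)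

/-- Angle of the triangle of centers at the center of the disk of radius `ρ0`,
for three pairwise intersecting disks of radii `ρ0, ρ1, ρ2` with dihedral
angles `θ01, θ02, θ12`, via the law of cosines. -/
noncomputable def Phi0 (ρ0 ρ1 ρ2 θ01 θ02 θ12 : ℝ) : ℝ :=
  Real.arccos ((len ρ0 ρ1 θ01 ^ 2 + len ρ0 ρ2 θ02 ^ 2 - len ρ1 ρ2 θ12 ^ 2) /
    (2 * len ρ0 ρ1 θ01 * len ρ0 ρ2 θ02))

open Set

/- By the law of cosines `cos Φ₀ = (A + B ρ₁) / (ℓ₀₁ ℓ₀₂)` with `A = ρ₀² + ρ₀ρ₂ cos Θ₀₂` and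
`B = ρ₀ cos Θ₀₁ - ρ₂ cos Θ₁₂`, and only `ℓ₀₁ = √(ρ₀² + ρ₁² + 2ρ₀ρ₁ c)`, `c = cos Θ₀₁`, depends
on `ρ₁`.  The derivative of `(A + B x) / ℓ₀₁(x)` is `-((A - B ρ₀ c) x + ρ₀ (A c - B ρ₀)) / ℓ₀₁(x)³`,
and both coefficients are nonnegative:
`A - B ρ₀ c = ρ₀² (1 - c²) + ρ₀ρ₂ (cos Θ₀₂ + c cos Θ₁₂)` and `A c - B ρ₀ = ρ₀ρ₂ (c cos Θ₀₂ + cos Θ₁₂)`.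
So `cos Φ₀` decreases with `ρ₁`, and `Φ₀` increases since `arccos` is antitone. -/

lemma len_sq (a b θ : ℝ) : len a b θ ^ 2 = a ^ 2 + b ^ 2 + 2 * a * b * cos θ := by
  refine sq_sqrt ?_
  nlinarith [neg_one_le_cos θ, cos_le_one θ, sq_nonneg (a + b), sq_nonneg (a - b)]

lemma len_pos {a b θ : ℝ} (ha : 0 < a) (hb : 0 ≤ b) (hθ : 0 ≤ cos θ) : 0 < len a b θ :=
  sqrt_pos.2 (by positivity)

lemma hasDerivAt_len (a θ : ℝ) {x : ℝ} (hx : len a x θ ≠ 0) :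
    HasDerivAt (fun y => len a y θ) ((x + a * cos θ) / len a x θ) x := by
  have hQ : HasDerivAt (fun y => a ^ 2 + y ^ 2 + 2 * a * y * cos θ)
      (2 * x + 2 * a * cos θ) x :=
    (((hasDerivAt_pow 2 x).const_add (a ^ 2)).add
      (((hasDerivAt_id' x).const_mul (2 * a)).mul_const (cos θ))).congr_deriv (by norm_num)
  have hQ0 : a ^ 2 + x ^ 2 + 2 * a * x * cos θ ≠ 0 := fun h => hx (by simp [len, h])
  refine (hQ.sqrt hQ0).congr_deriv ?_
  unfold len at hx ⊢
  field_simp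

lemma antitoneOn_div_len {a θ A B : ℝ} (ha : 0 < a) (hθ : 0 ≤ cos θ)
    (hA : B * a * cos θ ≤ A) (hB : B * a ≤ A * cos θ) :
    AntitoneOn (fun x => (A + B * x) / len a x θ) (Ioi 0) := by
  have hL : ∀ x ∈ Ioi (0 : ℝ), 0 < len a x θ := fun x hx => len_pos ha (le_of_lt hx) hθ
  have hderiv : ∀ x ∈ Ioi (0 : ℝ), HasDerivAt (fun x => (A + B * x) / len a x θ)
      (-((A - B * a * cos θ) * x + a * (A * cos θ - B * a)) / len a x θ ^ 3) x := by
    intro x hx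
    have hL0 := (hL x hx).ne'
    refine ((((hasDerivAt_id' x).const_mul B).const_add A).div
      (hasDerivAt_len a θ hL0) hL0).congr_deriv ?_
    have hsq := len_sq a x θ
    field_simp
    linear_combination B * hsq
  refine antitoneOn_of_deriv_nonpos (convex_Ioi 0)
    (fun x hx => (hderiv x hx).continuousAt.continuousWithinAt) ?_ ?_ <;> rw [interior_Ioi]
  · exact fun x hx => (hderiv x hx).differentiableAt.differentiableWithinAt
  · intro x hx
    have hE : 0 ≤ (A - B * a * cos θ) * x + a * (A * cos θ - B * a) :=
      add_nonneg (mul_nonneg (sub_nonneg.2 hA) (le_of_lt hx)) (mul_nonneg ha.le (sub_nonneg.2 hB))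
    rw [(hderiv x hx).deriv]
    exact div_nonpos_of_nonpos_of_nonneg (neg_nonpos.2 hE) (pow_pos (hL x hx) 3).le

lemma len_sq_add_len_sq_sub_len_sq (ρ0 ρ1 ρ2 θ01 θ02 θ12 : ℝ) :
    len ρ0 ρ1 θ01 ^ 2 + len ρ0 ρ2 θ02 ^ 2 - len ρ1 ρ2 θ12 ^ 2 =
      2 * ((ρ0 ^ 2 + ρ0 * ρ2 * cos θ02) + (ρ0 * cos θ01 - ρ2 * cos θ12) * ρ1) := by
  simp only [len_sq]
  ring

/-- With `ρ0, ρ2 > 0` and angles in `[0, π/2]` fixed, `Φ₀` is a (weakly)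
monotone nondecreasing function of `ρ1` on `(0, ∞)`. -/
theorem stmt1 (ρ0 ρ2 θ01 θ02 θ12 : ℝ) (h0 : 0 < ρ0) (h2 : 0 < ρ2)
    (h01 : θ01 ∈ Set.Icc 0 (π / 2)) (h02 : θ02 ∈ Set.Icc 0 (π / 2))
    (h12 : θ12 ∈ Set.Icc 0 (π / 2)) :
    MonotoneOn (fun ρ1 => Phi0 ρ0 ρ1 ρ2 θ01 θ02 θ12) (Set.Ioi 0) := by
  have hcos : ∀ θ ∈ Icc 0 (π / 2), 0 ≤ cos θ := fun θ hθ =>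
    cos_nonneg_of_mem_Icc ⟨by linarith [hθ.1, pi_pos], hθ.2⟩
  have hc01 := hcos _ h01
  have hc02 := hcos _ h02
  have hc12 := hcos _ h12
  have hratio := antitoneOn_div_len (A := ρ0 ^ 2 + ρ0 * ρ2 * cos θ02)
    (B := ρ0 * cos θ01 - ρ2 * cos θ12) h0 hc01
    (by linarith [mul_nonneg (sq_nonneg ρ0) (sub_nonneg.2 (cos_sq_le_one θ01)),
      mul_nonneg (mul_nonneg h0.le h2.le) hc02,
      mul_nonneg (mul_nonneg h0.le h2.le) (mul_nonneg hc01 hc12)])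
    (by linarith [mul_nonneg (mul_nonneg h0.le h2.le) hc12,
      mul_nonneg (mul_nonneg h0.le h2.le) (mul_nonneg hc01 hc02)])
  have hL02 := len_pos h0 h2.le hc02
  refine antitone_arccos.comp_antitoneOn fun x hx y hy hxy => ?_
  simp only [len_sq_add_len_sq_sub_len_sq]
  have hquot := div_le_div_of_nonneg_right (hratio hx hy hxy) hL02.le
  convert hquot using 1 <;> ring
end

section
/- With notation as above, the partial derivative of the angle Φ_0 with respect to log ρ_1 equals the partial derivative of the angle Φ_1 (the angle of the triangle of centers at the center of D_1) with respect to log ρ_0. That is, ∂Φ_0/∂(log ρ_1) = ∂Φ_1/∂(log ρ_0). -/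
open Real

lemma len_hasDeriv₂ (a θ s : ℝ) (hpos : 0 < a ^ 2 + s ^ 2 + 2 * a * s * Real.cos θ) :
    HasDerivAt (fun x => len a x θ) ((2 * s + 2 * a * Real.cos θ) / (2 * len a s θ)) s := by
  have hp : HasDerivAt (fun x : ℝ => a ^ 2 + x ^ 2 + 2 * a * x * Real.cos θ)
      (2 * s + 2 * a * Real.cos θ) s := by
    have h1 : HasDerivAt (fun x : ℝ => x ^ 2) (2 * s) s := by simpa using hasDerivAt_pow 2 s
    have h2 : HasDerivAt (fun x : ℝ => 2 * a * x * Real.cos θ) (2 * a * Real.cos θ) s := by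
      have h3 : (fun x : ℝ => 2 * a * x * Real.cos θ) = fun x : ℝ => 2 * a * Real.cos θ * x := by
        funext x; ring
      rw [h3]
      simpa using (hasDerivAt_id s).const_mul (2 * a * Real.cos θ)
    exact (h1.const_add (a ^ 2)).add h2
  simpa [len] using hp.sqrt (ne_of_gt hpos)

lemma len_hasDeriv₁ (a θ s : ℝ) (hpos : 0 < s ^ 2 + a ^ 2 + 2 * s * a * Real.cos θ) :
    HasDerivAt (fun x => len x a θ) ((2 * s + 2 * a * Real.cos θ) / (2 * len s a θ)) s := by
  have hp : HasDerivAt (fun x : ℝ => x ^ 2 + a ^ 2 + 2 * x * a * Real.cos θ)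
      (2 * s + 2 * a * Real.cos θ) s := by
    have h1 : HasDerivAt (fun x : ℝ => x ^ 2) (2 * s) s := by simpa using hasDerivAt_pow 2 s
    have h2 : HasDerivAt (fun x : ℝ => 2 * x * a * Real.cos θ) (2 * a * Real.cos θ) s := by
      have h3 : (fun x : ℝ => 2 * x * a * Real.cos θ) = fun x : ℝ => 2 * a * Real.cos θ * x := by
        funext x; ring
      rw [h3]
      simpa using (hasDerivAt_id s).const_mul (2 * a * Real.cos θ)
    exact (h1.add_const (a ^ 2)).add h2
  simpa [len] using hp.sqrt (ne_of_gt hpos)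

/-- 16 times the squared area of the triangle of centers, as a polynomial. -/
noncomputable def QQ (r0 r1 r2 x y z : ℝ) : ℝ :=
  2 * ((r1 ^ 2 + r2 ^ 2 + 2 * r1 * r2 * z) * (r0 ^ 2 + r2 ^ 2 + 2 * r0 * r2 * y) +
      (r0 ^ 2 + r2 ^ 2 + 2 * r0 * r2 * y) * (r0 ^ 2 + r1 ^ 2 + 2 * r0 * r1 * x) +
      (r0 ^ 2 + r1 ^ 2 + 2 * r0 * r1 * x) * (r1 ^ 2 + r2 ^ 2 + 2 * r1 * r2 * z)) -
    (r1 ^ 2 + r2 ^ 2 + 2 * r1 * r2 * z) ^ 2 - (r0 ^ 2 + r2 ^ 2 + 2 * r0 * r2 * y) ^ 2 -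
    (r0 ^ 2 + r1 ^ 2 + 2 * r0 * r1 * x) ^ 2

noncomputable def dval (r0 r1 r2 x y z : ℝ) : ℝ :=
  -(r1 * (2 * ((r1 + r0 * x) - (r1 + r2 * z)) * (r0 ^ 2 + r1 ^ 2 + 2 * r0 * r1 * x) -
      ((r0 ^ 2 + r1 ^ 2 + 2 * r0 * r1 * x) + (r0 ^ 2 + r2 ^ 2 + 2 * r0 * r2 * y) -
        (r1 ^ 2 + r2 ^ 2 + 2 * r1 * r2 * z)) * (r1 + r0 * x))) /
    (Real.sqrt (QQ r0 r1 r2 x y z) * (r0 ^ 2 + r1 ^ 2 + 2 * r0 * r1 * x))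

lemma tri2 (A B C p q r : ℝ) (hp : 0 < p) (hq : 0 < q) (hr : 0 < r)
    (hA0 : 0 ≤ A) (hA : A ≤ (q + r) ^ 2) (hB : p ^ 2 + r ^ 2 ≤ B) (hC : p ^ 2 + q ^ 2 ≤ C) :
    Real.sqrt A < Real.sqrt B + Real.sqrt C := by
  have hB0 : 0 < B := lt_of_lt_of_le (by positivity) hB
  have hC0 : 0 < C := lt_of_lt_of_le (by positivity) hC
  have hb2 : Real.sqrt B ^ 2 = B := Real.sq_sqrt hB0.le
  have hc2 : Real.sqrt C ^ 2 = C := Real.sq_sqrt hC0.le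
  have hbc : p ^ 2 + q * r ≤ Real.sqrt B * Real.sqrt C := by
    rw [← Real.sqrt_mul hB0.le]
    have h1 : (p ^ 2 + q * r) ^ 2 ≤ B * C := by
      have h2 : (p ^ 2 + r ^ 2) * (p ^ 2 + q ^ 2) ≤ B * C :=
        mul_le_mul hB hC (by positivity) hB0.le
      nlinarith [mul_nonneg (sq_nonneg p) (sq_nonneg (q - r))]
    calc p ^ 2 + q * r = Real.sqrt ((p ^ 2 + q * r) ^ 2) := (Real.sqrt_sq (by positivity)).symm
      _ ≤ Real.sqrt (B * C) := Real.sqrt_le_sqrt h1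
  have hkey : A < (Real.sqrt B + Real.sqrt C) ^ 2 := by nlinarith
  calc Real.sqrt A < Real.sqrt ((Real.sqrt B + Real.sqrt C) ^ 2) := Real.sqrt_lt_sqrt hA0 hkey
    _ = Real.sqrt B + Real.sqrt C := Real.sqrt_sq (by positivity)

lemma Qpos' (A B C r0 r1 r2 : ℝ) (h0 : 0 < r0) (h1 : 0 < r1) (h2 : 0 < r2)
    (hA1 : A ≤ (r1 + r2) ^ 2) (hA2 : r1 ^ 2 + r2 ^ 2 ≤ A)
    (hB1 : B ≤ (r0 + r2) ^ 2) (hB2 : r0 ^ 2 + r2 ^ 2 ≤ B)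
    (hC1 : C ≤ (r0 + r1) ^ 2) (hC2 : r0 ^ 2 + r1 ^ 2 ≤ C) :
    0 < 2 * (A * B + B * C + C * A) - A ^ 2 - B ^ 2 - C ^ 2 := by
  have hA0 : (0:ℝ) < A := lt_of_lt_of_le (by positivity) hA2
  have hB0 : (0:ℝ) < B := lt_of_lt_of_le (by positivity) hB2
  have hC0 : (0:ℝ) < C := lt_of_lt_of_le (by positivity) hC2
  have ta : Real.sqrt A < Real.sqrt B + Real.sqrt C :=
    tri2 A B C r0 r1 r2 h0 h1 h2 hA0.le hA1 hB2 hC2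
  have tb : Real.sqrt B < Real.sqrt A + Real.sqrt C :=
    tri2 B A C r1 r0 r2 h1 h0 h2 hB0.le hB1 (by linarith) (by linarith)
  have tc : Real.sqrt C < Real.sqrt A + Real.sqrt B :=
    tri2 C A B r2 r0 r1 h2 h0 h1 hC0.le hC1 (by linarith) (by linarith)
  have ha2 : Real.sqrt A ^ 2 = A := Real.sq_sqrt hA0.le
  have hb2 : Real.sqrt B ^ 2 = B := Real.sq_sqrt hB0.le
  have hc2 : Real.sqrt C ^ 2 = C := Real.sq_sqrt hC0.le
  have sA : 0 < Real.sqrt A := Real.sqrt_pos.2 hA0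
  have sB : 0 ≤ Real.sqrt B := Real.sqrt_nonneg B
  have sC : 0 ≤ Real.sqrt C := Real.sqrt_nonneg C
  have hprod : 0 < (Real.sqrt A + Real.sqrt B + Real.sqrt C) *
      (Real.sqrt B + Real.sqrt C - Real.sqrt A) * (Real.sqrt A + Real.sqrt C - Real.sqrt B) *
      (Real.sqrt A + Real.sqrt B - Real.sqrt C) :=
    mul_pos (mul_pos (mul_pos (by linarith) (by linarith)) (by linarith)) (by linarith)
  calc (0:ℝ) < _ := hprod
    _ = 2 * (A * B + B * C + C * A) - A ^ 2 - B ^ 2 - C ^ 2 := by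
      conv_rhs => rw [← ha2, ← hb2, ← hc2]
      ring

lemma QQpos (r0 r1 r2 x y z : ℝ) (h0 : 0 < r0) (h1 : 0 < r1) (h2 : 0 < r2)
    (hx0 : 0 ≤ x) (hy0 : 0 ≤ y) (hz0 : 0 ≤ z) (hx1 : x ≤ 1) (hy1 : y ≤ 1) (hz1 : z ≤ 1) :
    0 < QQ r0 r1 r2 x y z := by
  simp only [QQ]
  apply Qpos' _ _ _ r0 r1 r2 h0 h1 h2
  · nlinarith [mul_nonneg (mul_nonneg h1.le h2.le) (sub_nonneg.2 hz1)]
  · nlinarith [mul_nonneg (mul_nonneg h1.le h2.le) hz0]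
  · nlinarith [mul_nonneg (mul_nonneg h0.le h2.le) (sub_nonneg.2 hy1)]
  · nlinarith [mul_nonneg (mul_nonneg h0.le h2.le) hy0]
  · nlinarith [mul_nonneg (mul_nonneg h0.le h1.le) (sub_nonneg.2 hx1)]
  · nlinarith [mul_nonneg (mul_nonneg h0.le h1.le) hx0]

lemma key (r0 r1 r2 α β γ : ℝ) (h0 : 0 < r0) (h1 : 0 < r1) (h2 : 0 < r2)
    (hα0 : 0 ≤ Real.cos α) (hβ0 : 0 ≤ Real.cos β) (hγ0 : 0 ≤ Real.cos γ)
    (hα1 : Real.cos α ≤ 1) (hβ1 : Real.cos β ≤ 1) (hγ1 : Real.cos γ ≤ 1) :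
    HasDerivAt (fun t => Phi0 r0 (Real.exp t) r2 α β γ)
      (dval r0 r1 r2 (Real.cos α) (Real.cos β) (Real.cos γ)) (Real.log r1) := by
  have hCpos : 0 < r0 ^ 2 + r1 ^ 2 + 2 * r0 * r1 * Real.cos α := by
    nlinarith [mul_nonneg (mul_nonneg h0.le h1.le) hα0]
  have hBpos : 0 < r0 ^ 2 + r2 ^ 2 + 2 * r0 * r2 * Real.cos β := by
    nlinarith [mul_nonneg (mul_nonneg h0.le h2.le) hβ0]
  have hApos : 0 < r1 ^ 2 + r2 ^ 2 + 2 * r1 * r2 * Real.cos γ := by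
    nlinarith [mul_nonneg (mul_nonneg h1.le h2.le) hγ0]
  have hcpos : 0 < len r0 r1 α := by rw [len]; exact Real.sqrt_pos.2 hCpos
  have hbpos : 0 < len r0 r2 β := by rw [len]; exact Real.sqrt_pos.2 hBpos
  have hapos : 0 < len r1 r2 γ := by rw [len]; exact Real.sqrt_pos.2 hApos
  have hc2 : len r0 r1 α ^ 2 = r0 ^ 2 + r1 ^ 2 + 2 * r0 * r1 * Real.cos α := by
    rw [len]; exact Real.sq_sqrt hCpos.le
  have hb2 : len r0 r2 β ^ 2 = r0 ^ 2 + r2 ^ 2 + 2 * r0 * r2 * Real.cos β := by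
    rw [len]; exact Real.sq_sqrt hBpos.le
  have ha2 : len r1 r2 γ ^ 2 = r1 ^ 2 + r2 ^ 2 + 2 * r1 * r2 * Real.cos γ := by
    rw [len]; exact Real.sq_sqrt hApos.le
  have hQpos : 0 < QQ r0 r1 r2 (Real.cos α) (Real.cos β) (Real.cos γ) :=
    QQpos r0 r1 r2 _ _ _ h0 h1 h2 hα0 hβ0 hγ0 hα1 hβ1 hγ1
  have hc := len_hasDeriv₂ r0 α r1 hCpos
  have ha' := len_hasDeriv₁ r2 γ r1 hApos
  have hnum := ((hc.pow 2).add_const (len r0 r2 β ^ 2)).sub (ha'.pow 2)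
  have hden := (hc.const_mul 2).mul_const (len r0 r2 β)
  have hdenne : 2 * len r0 r1 α * len r0 r2 β ≠ 0 :=
    ne_of_gt (mul_pos (mul_pos two_pos hcpos) hbpos)
  have hg := hnum.div hden hdenne
  set x0 : ℝ := (len r0 r1 α ^ 2 + len r0 r2 β ^ 2 - len r1 r2 γ ^ 2) /
      (2 * len r0 r1 α * len r0 r2 β) with hx0def
  have he : 1 - x0 ^ 2 = QQ r0 r1 r2 (Real.cos α) (Real.cos β) (Real.cos γ) /
      (2 * len r0 r1 α * len r0 r2 β) ^ 2 := by
    rw [hx0def, div_pow, eq_div_iff (pow_ne_zero 2 hdenne), sub_mul, one_mul,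
      div_mul_cancel₀ _ (pow_ne_zero 2 hdenne)]
    simp only [QQ]
    rw [mul_pow, mul_pow, hc2, hb2, ha2]
    ring
  have hone : 0 < 1 - x0 ^ 2 := by
    rw [he]
    exact div_pos hQpos (pow_pos (mul_pos (mul_pos two_pos hcpos) hbpos) 2)
  have hne1 : x0 ≠ -1 := by intro h; rw [h] at hone; norm_num at hone
  have hne2 : x0 ≠ 1 := by intro h; rw [h] at hone; norm_num at hone
  have hs : Real.sqrt (1 - x0 ^ 2) =
      Real.sqrt (QQ r0 r1 r2 (Real.cos α) (Real.cos β) (Real.cos γ)) /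
        (2 * len r0 r1 α * len r0 r2 β) := by
    rw [he, Real.sqrt_div hQpos.le,
      Real.sqrt_sq (le_of_lt (mul_pos (mul_pos two_pos hcpos) hbpos))]
  have harc := (Real.hasDerivAt_arccos hne1 hne2).comp r1 hg
  rw [show r1 = Real.exp (Real.log r1) from (Real.exp_log h1).symm] at harc
  have hfin := harc.comp (Real.log r1) (Real.hasDerivAt_exp (Real.log r1))
  refine hfin.congr_deriv ?_
  rw [Real.exp_log h1, hs]
  simp only [dval]
  rw [← hc2, ← hb2, ← ha2]
  have hsQ : Real.sqrt (QQ r0 r1 r2 (Real.cos α) (Real.cos β) (Real.cos γ)) ≠ 0 :=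
    (Real.sqrt_pos.2 hQpos).ne'
  norm_num
  field_simp
  ring

/-- The partial derivative of `Φ₀` with respect to `log ρ１` equals the partial
derivative of `Φ₁` (the angle at the center of `D₁`, which is
`Phi0 ρ1 ρ0 ρ2 θ01 θ12 θ02`) with respect to `log ρ0`. -/
theorem stmt2 (ρ0 ρ1 ρ2 θ01 θ02 θ12 : ℝ) (h0 : 0 < ρ0) (h1 : 0 < ρ1) (h2 : 0 < ρ2)
    (h01 : θ01 ∈ Set.Icc 0 (π / 2)) (h02 : θ02 ∈ Set.Icc 0 (π / 2))
    (h12 : θ12 ∈ Set.Icc 0 (π / 2)) :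
    deriv (fun t => Phi0 ρ0 (Real.exp t) ρ2 θ01 θ02 θ12) (Real.log ρ1) =
      deriv (fun t => Phi0 ρ1 (Real.exp t) ρ2 θ01 θ12 θ02) (Real.log ρ0) := by
  have hpi := Real.pi_nonneg
  have c01a : 0 ≤ Real.cos θ01 :=
    Real.cos_nonneg_of_mem_Icc ⟨by linarith [h01.1], h01.2⟩
  have c02a : 0 ≤ Real.cos θ02 :=
    Real.cos_nonneg_of_mem_Icc ⟨by linarith [h02.1], h02.2⟩
  have c12a : 0 ≤ Real.cos θ12 :=
    Real.cos_nonneg_of_mem_Icc ⟨by linarith [h12.1], h12.2⟩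
  have c01b : Real.cos θ01 ≤ 1 := Real.cos_le_one _
  have c02b : Real.cos θ02 ≤ 1 := Real.cos_le_one _
  have c12b : Real.cos θ12 ≤ 1 := Real.cos_le_one _
  have k1 := (key ρ0 ρ1 ρ2 θ01 θ02 θ12 h0 h1 h2 c01a c02a c12a c01b c02b c12b).deriv
  have k2 := (key ρ1 ρ0 ρ2 θ01 θ12 θ02 h1 h0 h2 c01a c12a c02a c01b c12b c02b).deriv
  rw [k1, k2]
  simp only [dval]
  have hQe : QQ ρ1 ρ0 ρ2 (Real.cos θ01) (Real.cos θ12) (Real.cos θ02) =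
      QQ ρ0 ρ1 ρ2 (Real.cos θ01) (Real.cos θ02) (Real.cos θ12) := by
    simp only [QQ]; ring
  rw [hQe]
  have hQpos : 0 < QQ ρ0 ρ1 ρ2 (Real.cos θ01) (Real.cos θ02) (Real.cos θ12) :=
    QQpos ρ0 ρ1 ρ2 _ _ _ h0 h1 h2 c01a c02a c12a c01b c02b c12b
  have hsQ : 0 < Real.sqrt (QQ ρ0 ρ1 ρ2 (Real.cos θ01) (Real.cos θ02) (Real.cos θ12)) :=
    Real.sqrt_pos.2 hQpos
  have hC1 : 0 < ρ0 ^ 2 + ρ1 ^ 2 + 2 * ρ0 * ρ1 * Real.cos θ01 := by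
    nlinarith [mul_nonneg (mul_nonneg h0.le h1.le) c01a]
  have hC2 : 0 < ρ1 ^ 2 + ρ0 ^ 2 + 2 * ρ1 * ρ0 * Real.cos θ01 := by linarith [hC1]; 
  rw [div_eq_div_iff (ne_of_gt (mul_pos hsQ hC1)) (ne_of_gt (mul_pos hsQ hC2))]
  ring
end

section
/- There is a universal constant C such that for all positive reals ρ_0, ρ_1, ρ_2 and all angles Θ_{01}, Θ_{02}, Θ_{12} ∈ [0, π/2] for which the triangle of centers exists, the partial derivative ∂Φ_0/∂(log ρ_1) is at most C · Φ_0. -/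
open Real

/-- Positivity of `P = (ρ0²+ρ1²+2ρ0ρ1c1)(ρ0²+ρ2²+2ρ0ρ2c2) - S²`, i.e. four times the
squared area of the triangle of centers. -/
lemma stmt3_P_pos (a y b c1 c2 c3 : ℝ) (ha : 0 < a) (hy : 0 < y) (hb : 0 < b)
    (h10 : 0 ≤ c1) (h11 : c1 ≤ 1) (h20 : 0 ≤ c2) (h21 : c2 ≤ 1)
    (h30 : 0 ≤ c3) (h31 : c3 ≤ 1) :
    0 < (a^2+y^2+2*a*y*c1)*(a^2+b^2+2*a*b*c2) - (a^2+a*y*c1+a*b*c2-y*b*c3)^2 := by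
  have hid : (a^2+y^2+2*a*y*c1)*(a^2+b^2+2*a*b*c2) - (a^2+a*y*c1+a*b*c2-y*b*c3)^2
      = y^2*b^2*((1-c3)*(1+c3)) + a^2*b^2*((1-c2)*(1+c2)) + a^2*y^2*((1-c1)*(1+c1))
        + 2*a*y*b^2*(c2*c3+c1) + 2*a*y^2*b*(c2+c1*c3) + 2*a^2*y*b*(c3+c1*c2) := by ring
  have e1 : 0 ≤ y^2*b^2*((1-c3)*(1+c3)) :=
    mul_nonneg (by positivity) (mul_nonneg (by linarith) (by linarith))
  have e2 : 0 ≤ a^2*b^2*((1-c2)*(1+c2)) :=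
    mul_nonneg (by positivity) (mul_nonneg (by linarith) (by linarith))
  have e5 : 0 ≤ 2*a*y^2*b*(c2+c1*c3) :=
    mul_nonneg (by positivity) (by nlinarith [mul_nonneg h10 h30])
  have e6 : 0 ≤ 2*a^2*y*b*(c3+c1*c2) :=
    mul_nonneg (by positivity) (by nlinarith [mul_nonneg h10 h20])
  rcases lt_or_eq_of_le h11 with h | h
  · have e3 : 0 < a^2*y^2*((1-c1)*(1+c1)) :=
      mul_pos (by positivity) (mul_pos (by linarith) (by linarith))
    have e4 : 0 ≤ 2*a*y*b^2*(c2*c3+c1) :=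
      mul_nonneg (by positivity) (by nlinarith [mul_nonneg h20 h30])
    linarith
  · have e3 : 0 ≤ a^2*y^2*((1-c1)*(1+c1)) :=
      mul_nonneg (by positivity) (mul_nonneg (by linarith) (by linarith))
    have e4 : 0 < 2*a*y*b^2*(c2*c3+c1) := by
      apply mul_pos (by positivity)
      nlinarith [mul_nonneg h20 h30]
    linarith

/-- The core polynomial estimate: `ρ1·ρ0·F·(ρ0+ρ2) ≤ (ρ0+ρ1)·P`. -/
lemma stmt3_D_nonneg (a y b c1 c2 c3 : ℝ) (ha : 0 < a) (hy : 0 < y) (hb : 0 < b)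
    (h10 : 0 ≤ c1) (h11 : c1 ≤ 1) (h20 : 0 ≤ c2) (h21 : c2 ≤ 1)
    (h30 : 0 ≤ c3) (h31 : c3 ≤ 1) :
    y*a*(a*y*(1-c1^2) + a*b*(c3+c1*c2) + b*y*(c2+c1*c3))*(a+b) ≤
      (a+y)*((a^2+y^2+2*a*y*c1)*(a^2+b^2+2*a*b*c2) - (a^2+a*y*c1+a*b*c2-y*b*c3)^2) := by
  have e1 : 0 ≤ y^3*b^2*((1-c3)*(1+c3)) :=
    mul_nonneg (by positivity) (mul_nonneg (by linarith) (by linarith))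
  have e2 : 0 ≤ a*y^2*b^2*((1-c3)*(1+c3-c2)+c2*c3+c1*(2-c3)) := by
    apply mul_nonneg (by positivity)
    have t1 := mul_nonneg (show (0:ℝ) ≤ 1-c3 by linarith) (show (0:ℝ) ≤ 1+c3-c2 by linarith)
    have t2 := mul_nonneg h20 h30
    have t3 := mul_nonneg h10 (show (0:ℝ) ≤ 2-c3 by linarith)
    linarith
  have e3 : 0 ≤ 2*a*y^3*b*(c2+c1*c3) :=
    mul_nonneg (by positivity) (by nlinarith [mul_nonneg h10 h30])
  have e4 : 0 ≤ a^2*y*b^2*((1-c3)*(1-c2^2)/2 + c2*((1-c2)+c3*(3-c2))/2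
      + c1*(2-c2) + (1-c2)*(1-c3)*c1^2/2) := by
    apply mul_nonneg (by positivity)
    have h1 : 0 ≤ (1-c3)*(1-c2^2) :=
      mul_nonneg (by linarith) (by nlinarith)
    have h2 : 0 ≤ c2*((1-c2)+c3*(3-c2)) :=
      mul_nonneg h20 (by nlinarith [mul_nonneg h30 (show (0:ℝ) ≤ 3-c2 by linarith)])
    have h3 : 0 ≤ c1*(2-c2) := mul_nonneg h10 (by linarith)
    have h4 : 0 ≤ (1-c2)*(1-c3)*c1^2 :=
      mul_nonneg (mul_nonneg (by linarith) (by linarith)) (sq_nonneg c1)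
    linarith
  have e5 : 0 ≤ a^2*y^2*b*(c3+2*c1*c2+c1*c3+c2*c3+c1^2*c2+c1^2*c3*(1-c2)) := by
    apply mul_nonneg (by positivity)
    have h1 := mul_nonneg h10 h20
    have h2 := mul_nonneg h10 h30
    have h3 := mul_nonneg h20 h30
    have h4 := mul_nonneg (sq_nonneg c1) h20
    have h5 := mul_nonneg (mul_nonneg (sq_nonneg c1) h30) (show (0:ℝ) ≤ 1-c2 by linarith)
    linarith
  have e6 : 0 ≤ a^2*y^3*((1-c1)*(1+c1)*(1+c2+c3*(1-c2))/2) := by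
    apply mul_nonneg (by positivity)
    have h1 : 0 ≤ (1-c1)*(1+c1) := mul_nonneg (by linarith) (by linarith)
    have h2 : 0 ≤ 1+c2+c3*(1-c2) := by
      have := mul_nonneg h30 (show (0:ℝ) ≤ 1-c2 by linarith)
      linarith
    have := mul_nonneg h1 h2
    linarith
  have e7 : 0 ≤ a^3*b^2*((1-c2)*(1+c2)) :=
    mul_nonneg (by positivity) (mul_nonneg (by linarith) (by linarith))
  have e8 : 0 ≤ a^3*y*b*(c3+c1*c2) :=
    mul_nonneg (by positivity) (by nlinarith [mul_nonneg h10 h20])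
  have e9 : 0 ≤ (1-c1^2)*(1-c2)*(1-c3)/2*(a^2*y*(y-b)^2) := by
    apply mul_nonneg
    · have : 0 ≤ 1 - c1^2 := by nlinarith
      have := mul_nonneg (mul_nonneg this (show (0:ℝ) ≤ 1-c2 by linarith))
        (show (0:ℝ) ≤ 1-c3 by linarith)
      linarith
    · positivity
  have hid : (a+y)*((a^2+y^2+2*a*y*c1)*(a^2+b^2+2*a*b*c2) - (a^2+a*y*c1+a*b*c2-y*b*c3)^2)
      - y*a*(a*y*(1-c1^2) + a*b*(c3+c1*c2) + b*y*(c2+c1*c3))*(a+b)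
      = y^3*b^2*((1-c3)*(1+c3))
        + a*y^2*b^2*((1-c3)*(1+c3-c2)+c2*c3+c1*(2-c3))
        + 2*a*y^3*b*(c2+c1*c3)
        + a^2*y*b^2*((1-c3)*(1-c2^2)/2 + c2*((1-c2)+c3*(3-c2))/2
            + c1*(2-c2) + (1-c2)*(1-c3)*c1^2/2)
        + a^2*y^2*b*(c3+2*c1*c2+c1*c3+c2*c3+c1^2*c2+c1^2*c3*(1-c2))
        + a^2*y^3*((1-c1)*(1+c1)*(1+c2+c3*(1-c2))/2)
        + a^3*b^2*((1-c2)*(1+c2))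
        + a^3*y*b*(c3+c1*c2)
        + (1-c1^2)*(1-c2)*(1-c3)/2*(a^2*y*(y-b)^2) := by ring
  linarith

/-- Key inequality with the square roots abstracted: `ρ1·ρ0·F·v ≤ 2u·P`. -/
lemma stmt3_key (a y b c1 c2 c3 u v : ℝ) (ha : 0 < a) (hy : 0 < y) (hb : 0 < b)
    (h10 : 0 ≤ c1) (h11 : c1 ≤ 1) (h20 : 0 ≤ c2) (h21 : c2 ≤ 1)
    (h30 : 0 ≤ c3) (h31 : c3 ≤ 1) (hu : 0 < u) (hv : 0 < v)
    (hu2 : u^2 = a^2 + y^2 + 2*a*y*c1) (hv2 : v^2 = a^2 + b^2 + 2*a*b*c2) :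
    y*a*(a*y*(1-c1^2) + a*b*(c3+c1*c2) + b*y*(c2+c1*c3))*v ≤
      2*u*((a^2+y^2+2*a*y*c1)*(a^2+b^2+2*a*b*c2) - (a^2+a*y*c1+a*b*c2-y*b*c3)^2) := by
  have hF : 0 ≤ y*a*(a*y*(1-c1^2) + a*b*(c3+c1*c2) + b*y*(c2+c1*c3)) := by
    apply mul_nonneg (by positivity)
    have t1 : 0 ≤ a*y*(1-c1^2) := mul_nonneg (by positivity) (by nlinarith)
    have t2 : 0 ≤ a*b*(c3+c1*c2) := mul_nonneg (by positivity) (by nlinarith [mul_nonneg h10 h20])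
    have t3 : 0 ≤ b*y*(c2+c1*c3) := mul_nonneg (by positivity) (by nlinarith [mul_nonneg h10 h30])
    linarith
  have hvab : v ≤ a + b := by
    nlinarith [mul_nonneg (mul_nonneg ha.le hb.le) (show (0:ℝ) ≤ 1 - c2 by linarith),
      add_pos ha hb]
  have hu_ge : a + y ≤ 2*u := by
    nlinarith [mul_nonneg (mul_nonneg ha.le hy.le) h10, sq_nonneg (a-y), add_pos ha hy]
  have hP := stmt3_P_pos a y b c1 c2 c3 ha hy hb h10 h11 h20 h21 h30 h31
  have hD := stmt3_D_nonneg a y b c1 c2 c3 ha hy hb h10 h11 h20 h21 h30 h31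
  calc y*a*(a*y*(1-c1^2) + a*b*(c3+c1*c2) + b*y*(c2+c1*c3))*v
      ≤ y*a*(a*y*(1-c1^2) + a*b*(c3+c1*c2) + b*y*(c2+c1*c3))*(a+b) :=
        mul_le_mul_of_nonneg_left hvab hF
    _ ≤ (a+y)*((a^2+y^2+2*a*y*c1)*(a^2+b^2+2*a*b*c2) - (a^2+a*y*c1+a*b*c2-y*b*c3)^2) := hD
    _ ≤ 2*u*((a^2+y^2+2*a*y*c1)*(a^2+b^2+2*a*b*c2) - (a^2+a*y*c1+a*b*c2-y*b*c3)^2) :=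
        mul_le_mul_of_nonneg_right hu_ge hP.le

set_option maxHeartbeats 2000000

/-- There is a universal constant `C` such that
`∂Φ₀/∂(log ρ1) ≤ C · Φ₀` for all radii and all angles in `[0, π/2]`. -/
theorem stmt3 :
    ∃ C : ℝ, 0 < C ∧
      ∀ ρ0 ρ1 ρ2 θ01 θ02 θ12 : ℝ, 0 < ρ0 → 0 < ρ1 → 0 < ρ2 →
        θ01 ∈ Set.Icc 0 (π / 2) → θ02 ∈ Set.Icc 0 (π / 2) → θ12 ∈ Set.Icc 0 (π / 2) →
        deriv (fun t => Phi0 ρ0 (Real.exp t) ρ2 θ01 θ02 θ12) (Real.log ρ1) ≤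
          C * Phi0 ρ0 ρ1 ρ2 θ01 θ02 θ12 := by
  refine ⟨2, by norm_num, ?_⟩
  intro a y b θ01 θ02 θ12 ha hy hb h01 h02 h12
  obtain ⟨h01l, h01u⟩ := h01
  obtain ⟨h02l, h02u⟩ := h02
  obtain ⟨h12l, h12u⟩ := h12
  have hπ := Real.pi_pos
  have h10 : 0 ≤ Real.cos θ01 := Real.cos_nonneg_of_mem_Icc ⟨by linarith, h01u⟩
  have h11 : Real.cos θ01 ≤ 1 := Real.cos_le_one _
  have h20 : 0 ≤ Real.cos θ02 := Real.cos_nonneg_of_mem_Icc ⟨by linarith, h02u⟩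
  have h21 : Real.cos θ02 ≤ 1 := Real.cos_le_one _
  have h30 : 0 ≤ Real.cos θ12 := Real.cos_nonneg_of_mem_Icc ⟨by linarith, h12u⟩
  have h31 : Real.cos θ12 ≤ 1 := Real.cos_le_one _
  have hexp : Real.exp (Real.log y) = y := Real.exp_log hy
  have hApos : 0 < a^2 + y^2 + 2*a*y*Real.cos θ01 := by
    have := mul_nonneg (mul_nonneg (by linarith : (0:ℝ) ≤ 2*a) hy.le) h10
    nlinarith
  have hVpos : 0 < a^2 + b^2 + 2*a*b*Real.cos θ02 := by
    have := mul_nonneg (mul_nonneg (by linarith : (0:ℝ) ≤ 2*a) hb.le) h20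
    nlinarith
  have hsA : 0 < Real.sqrt (a^2 + y^2 + 2*a*y*Real.cos θ01) := Real.sqrt_pos.2 hApos
  have hsV : 0 < Real.sqrt (a^2 + b^2 + 2*a*b*Real.cos θ02) := Real.sqrt_pos.2 hVpos
  -- rewrite the function inside the derivative
  have hfun : (fun t => Phi0 a (Real.exp t) b θ01 θ02 θ12)
      = fun t => Real.arccos (((a^2 + Real.exp t^2 + 2*a*Real.exp t*Real.cos θ01)
          + (a^2 + b^2 + 2*a*b*Real.cos θ02)
          - (Real.exp t^2 + b^2 + 2*Real.exp t*b*Real.cos θ12))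
        / (2 * Real.sqrt (a^2 + Real.exp t^2 + 2*a*Real.exp t*Real.cos θ01)
            * Real.sqrt (a^2 + b^2 + 2*a*b*Real.cos θ02))) := by
    funext t
    have he := Real.exp_pos t
    have n1 : (0:ℝ) ≤ a^2 + Real.exp t^2 + 2*a*Real.exp t*Real.cos θ01 := by
      have := mul_nonneg (mul_nonneg (by linarith : (0:ℝ) ≤ 2*a) he.le) h10
      nlinarith
    have n2 : (0:ℝ) ≤ a^2 + b^2 + 2*a*b*Real.cos θ02 := hVpos.le
    have n3 : (0:ℝ) ≤ Real.exp t^2 + b^2 + 2*Real.exp t*b*Real.cos θ12 := by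
      have := mul_nonneg (mul_nonneg (by linarith : (0:ℝ) ≤ 2*Real.exp t) hb.le) h30
      nlinarith
    simp only [Phi0, len]
    rw [Real.sq_sqrt n1, Real.sq_sqrt n2, Real.sq_sqrt n3]
  have hPhi0 : Phi0 a y b θ01 θ02 θ12
      = Real.arccos (((a^2 + y^2 + 2*a*y*Real.cos θ01)
          + (a^2 + b^2 + 2*a*b*Real.cos θ02)
          - (y^2 + b^2 + 2*y*b*Real.cos θ12))
        / (2 * Real.sqrt (a^2 + y^2 + 2*a*y*Real.cos θ01)
            * Real.sqrt (a^2 + b^2 + 2*a*b*Real.cos θ02))) := by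
    have n3 : (0:ℝ) ≤ y^2 + b^2 + 2*y*b*Real.cos θ12 := by
      have := mul_nonneg (mul_nonneg (by linarith : (0:ℝ) ≤ 2*y) hb.le) h30
      nlinarith
    simp only [Phi0, len]
    rw [Real.sq_sqrt hApos.le, Real.sq_sqrt hVpos.le, Real.sq_sqrt n3]
  -- derivative building blocks
  have hE : HasDerivAt Real.exp y (Real.log y) := by
    simpa [hexp] using Real.hasDerivAt_exp (Real.log y)
  have hE2 : HasDerivAt (fun t => Real.exp t ^ 2) (2*y^2) (Real.log y) := by
    have h := hE.fun_pow 2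
    refine h.congr_deriv ?_
    rw [hexp]; push_cast; ring
  have hU : HasDerivAt (fun t => a^2 + Real.exp t^2 + 2*a*Real.exp t*Real.cos θ01)
      (2*y^2 + 2*a*y*Real.cos θ01) (Real.log y) := by
    have h1 := (hE.const_mul (2*a)).mul_const (Real.cos θ01)
    exact (hE2.const_add (a^2)).add h1
  have hWd : HasDerivAt (fun t => Real.exp t^2 + b^2 + 2*Real.exp t*b*Real.cos θ12)
      (2*y^2 + 2*y*b*Real.cos θ12) (Real.log y) := by
    have h1 := ((hE.const_mul 2).mul_const b).mul_const (Real.cos θ12)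
    exact (hE2.add_const (b^2)).add h1
  have hsU : HasDerivAt (fun t => Real.sqrt (a^2 + Real.exp t^2 + 2*a*Real.exp t*Real.cos θ01))
      (1/(2*Real.sqrt (a^2 + y^2 + 2*a*y*Real.cos θ01)) * (2*y^2 + 2*a*y*Real.cos θ01))
      (Real.log y) := by
    have hne : (a^2 + Real.exp (Real.log y)^2 + 2*a*Real.exp (Real.log y)*Real.cos θ01) ≠ 0 := by
      rw [hexp]; exact ne_of_gt hApos
    have h := hU.sqrt hne
    convert h using 1
    rw [hexp]; ring
  have hN : HasDerivAt (fun t => (a^2 + Real.exp t^2 + 2*a*Real.exp t*Real.cos θ01)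
      + (a^2 + b^2 + 2*a*b*Real.cos θ02)
      - (Real.exp t^2 + b^2 + 2*Real.exp t*b*Real.cos θ12))
      ((2*y^2 + 2*a*y*Real.cos θ01) - (2*y^2 + 2*y*b*Real.cos θ12)) (Real.log y) :=
    (hU.add_const _).sub hWd
  have hDen : HasDerivAt (fun t => 2 * Real.sqrt (a^2 + Real.exp t^2 + 2*a*Real.exp t*Real.cos θ01)
      * Real.sqrt (a^2 + b^2 + 2*a*b*Real.cos θ02))
      (2*(1/(2*Real.sqrt (a^2 + y^2 + 2*a*y*Real.cos θ01)) * (2*y^2 + 2*a*y*Real.cos θ01))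
        * Real.sqrt (a^2 + b^2 + 2*a*b*Real.cos θ02)) (Real.log y) :=
    (hsU.const_mul 2).mul_const _
  have hdne : (fun t => 2 * Real.sqrt (a^2 + Real.exp t^2 + 2*a*Real.exp t*Real.cos θ01)
      * Real.sqrt (a^2 + b^2 + 2*a*b*Real.cos θ02)) (Real.log y) ≠ 0 := by
    simp only [hexp]
    exact mul_ne_zero (mul_ne_zero two_ne_zero hsA.ne') hsV.ne'
  have hgraw := hN.div hDen hdne
  have hu2 : (Real.sqrt (a^2 + y^2 + 2*a*y*Real.cos θ01))^2 = (a^2 + y^2 + 2*a*y*Real.cos θ01) := Real.sq_sqrt hApos.le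
  have hv2 : (Real.sqrt (a^2 + b^2 + 2*a*b*Real.cos θ02))^2 = (a^2 + b^2 + 2*a*b*Real.cos θ02) := Real.sq_sqrt hVpos.le
  have hgclean : HasDerivAt (fun t => ((a^2 + Real.exp t^2 + 2*a*Real.exp t*Real.cos θ01)
      + (a^2 + b^2 + 2*a*b*Real.cos θ02)
      - (Real.exp t^2 + b^2 + 2*Real.exp t*b*Real.cos θ12))
      / (2 * Real.sqrt (a^2 + Real.exp t^2 + 2*a*Real.exp t*Real.cos θ01)
          * Real.sqrt (a^2 + b^2 + 2*a*b*Real.cos θ02)))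
      ((((2*y^2 + 2*a*y*Real.cos θ01) - (2*y^2 + 2*y*b*Real.cos θ12))*(2*(Real.sqrt (a^2 + y^2 + 2*a*y*Real.cos θ01))^2*Real.sqrt (a^2 + b^2 + 2*a*b*Real.cos θ02)) - ((a^2 + y^2 + 2*a*y*Real.cos θ01) + (a^2 + b^2 + 2*a*b*Real.cos θ02) - (y^2 + b^2 + 2*y*b*Real.cos θ12))*((2*y^2 + 2*a*y*Real.cos θ01)*Real.sqrt (a^2 + b^2 + 2*a*b*Real.cos θ02))) / (Real.sqrt (a^2 + y^2 + 2*a*y*Real.cos θ01)*(2*Real.sqrt (a^2 + y^2 + 2*a*y*Real.cos θ01)*Real.sqrt (a^2 + b^2 + 2*a*b*Real.cos θ02))^2)) (Real.log y) := by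
    refine hgraw.congr_deriv ?_
    simp only [hexp]
    field_simp [hsA.ne', hsV.ne']
  have hP := stmt3_P_pos a y b (Real.cos θ01) (Real.cos θ02) (Real.cos θ12)
    ha hy hb h10 h11 h20 h21 h30 h31
  have hQlt : (((a^2 + y^2 + 2*a*y*Real.cos θ01) + (a^2 + b^2 + 2*a*b*Real.cos θ02) - (y^2 + b^2 + 2*y*b*Real.cos θ12)) / (2 * Real.sqrt (a^2 + y^2 + 2*a*y*Real.cos θ01) * Real.sqrt (a^2 + b^2 + 2*a*b*Real.cos θ02)))^2 < 1 := by
    rw [div_pow, div_lt_one (by positivity)]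
    have h4 : (2 * Real.sqrt (a^2 + y^2 + 2*a*y*Real.cos θ01) * Real.sqrt (a^2 + b^2 + 2*a*b*Real.cos θ02))^2 = 4*((a^2 + y^2 + 2*a*y*Real.cos θ01)*(a^2 + b^2 + 2*a*b*Real.cos θ02)) := by
      rw [show (2 * Real.sqrt (a^2 + y^2 + 2*a*y*Real.cos θ01) * Real.sqrt (a^2 + b^2 + 2*a*b*Real.cos θ02))^2 = 4*((Real.sqrt (a^2 + y^2 + 2*a*y*Real.cos θ01))^2*(Real.sqrt (a^2 + b^2 + 2*a*b*Real.cos θ02))^2) by ring, hu2, hv2]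
    rw [h4]
    nlinarith [hP]
  have hne1 : (((a^2 + y^2 + 2*a*y*Real.cos θ01) + (a^2 + b^2 + 2*a*b*Real.cos θ02) - (y^2 + b^2 + 2*y*b*Real.cos θ12)) / (2 * Real.sqrt (a^2 + y^2 + 2*a*y*Real.cos θ01) * Real.sqrt (a^2 + b^2 + 2*a*b*Real.cos θ02))) ≠ -1 := by
    intro h; rw [h] at hQlt; norm_num at hQlt
  have hne2 : (((a^2 + y^2 + 2*a*y*Real.cos θ01) + (a^2 + b^2 + 2*a*b*Real.cos θ02) - (y^2 + b^2 + 2*y*b*Real.cos θ12)) / (2 * Real.sqrt (a^2 + y^2 + 2*a*y*Real.cos θ01) * Real.sqrt (a^2 + b^2 + 2*a*b*Real.cos θ02))) ≠ 1 := by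
    intro h; rw [h] at hQlt; norm_num at hQlt
  have hval : (fun t => ((a^2 + Real.exp t^2 + 2*a*Real.exp t*Real.cos θ01)
      + (a^2 + b^2 + 2*a*b*Real.cos θ02)
      - (Real.exp t^2 + b^2 + 2*Real.exp t*b*Real.cos θ12))
      / (2 * Real.sqrt (a^2 + Real.exp t^2 + 2*a*Real.exp t*Real.cos θ01)
          * Real.sqrt (a^2 + b^2 + 2*a*b*Real.cos θ02))) (Real.log y) = (((a^2 + y^2 + 2*a*y*Real.cos θ01) + (a^2 + b^2 + 2*a*b*Real.cos θ02) - (y^2 + b^2 + 2*y*b*Real.cos θ12)) / (2 * Real.sqrt (a^2 + y^2 + 2*a*y*Real.cos θ01) * Real.sqrt (a^2 + b^2 + 2*a*b*Real.cos θ02))) := by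
    simp only [hexp]
  have harc : HasDerivAt Real.arccos (-(1/Real.sqrt (1 - (((a^2 + y^2 + 2*a*y*Real.cos θ01) + (a^2 + b^2 + 2*a*b*Real.cos θ02) - (y^2 + b^2 + 2*y*b*Real.cos θ12)) / (2 * Real.sqrt (a^2 + y^2 + 2*a*y*Real.cos θ01) * Real.sqrt (a^2 + b^2 + 2*a*b*Real.cos θ02)))^2)))
      ((fun t => ((a^2 + Real.exp t^2 + 2*a*Real.exp t*Real.cos θ01)
      + (a^2 + b^2 + 2*a*b*Real.cos θ02)
      - (Real.exp t^2 + b^2 + 2*Real.exp t*b*Real.cos θ12))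
      / (2 * Real.sqrt (a^2 + Real.exp t^2 + 2*a*Real.exp t*Real.cos θ01)
          * Real.sqrt (a^2 + b^2 + 2*a*b*Real.cos θ02))) (Real.log y)) := by
    rw [hval]; exact Real.hasDerivAt_arccos hne1 hne2
  have hcomp := harc.comp (Real.log y) hgclean
  have hfinal : HasDerivAt (fun t => Real.arccos (((a^2 + Real.exp t^2 + 2*a*Real.exp t*Real.cos θ01)
      + (a^2 + b^2 + 2*a*b*Real.cos θ02)
      - (Real.exp t^2 + b^2 + 2*Real.exp t*b*Real.cos θ12))
      / (2 * Real.sqrt (a^2 + Real.exp t^2 + 2*a*Real.exp t*Real.cos θ01)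
          * Real.sqrt (a^2 + b^2 + 2*a*b*Real.cos θ02))))
      (-(1/Real.sqrt (1 - (((a^2 + y^2 + 2*a*y*Real.cos θ01) + (a^2 + b^2 + 2*a*b*Real.cos θ02) - (y^2 + b^2 + 2*y*b*Real.cos θ12)) / (2 * Real.sqrt (a^2 + y^2 + 2*a*y*Real.cos θ01) * Real.sqrt (a^2 + b^2 + 2*a*b*Real.cos θ02)))^2)) * ((((2*y^2 + 2*a*y*Real.cos θ01) - (2*y^2 + 2*y*b*Real.cos θ12))*(2*(Real.sqrt (a^2 + y^2 + 2*a*y*Real.cos θ01))^2*Real.sqrt (a^2 + b^2 + 2*a*b*Real.cos θ02)) - ((a^2 + y^2 + 2*a*y*Real.cos θ01) + (a^2 + b^2 + 2*a*b*Real.cos θ02) - (y^2 + b^2 + 2*y*b*Real.cos θ12))*((2*y^2 + 2*a*y*Real.cos θ01)*Real.sqrt (a^2 + b^2 + 2*a*b*Real.cos θ02))) / (Real.sqrt (a^2 + y^2 + 2*a*y*Real.cos θ01)*(2*Real.sqrt (a^2 + y^2 + 2*a*y*Real.cos θ01)*Real.sqrt (a^2 + b^2 + 2*a*b*Real.cos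 θ02))^2))) (Real.log y) := hcomp
  rw [hfun, hfinal.deriv, hPhi0]
  have h1Q : 0 < 1 - (((a^2 + y^2 + 2*a*y*Real.cos θ01) + (a^2 + b^2 + 2*a*b*Real.cos θ02) - (y^2 + b^2 + 2*y*b*Real.cos θ12)) / (2 * Real.sqrt (a^2 + y^2 + 2*a*y*Real.cos θ01) * Real.sqrt (a^2 + b^2 + 2*a*b*Real.cos θ02)))^2 := by linarith
  have hspos : 0 < Real.sqrt (1 - (((a^2 + y^2 + 2*a*y*Real.cos θ01) + (a^2 + b^2 + 2*a*b*Real.cos θ02) - (y^2 + b^2 + 2*y*b*Real.cos θ12)) / (2 * Real.sqrt (a^2 + y^2 + 2*a*y*Real.cos θ01) * Real.sqrt (a^2 + b^2 + 2*a*b*Real.cos θ02)))^2) := Real.sqrt_pos.2 h1Q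
  have harcge : Real.sqrt (1 - (((a^2 + y^2 + 2*a*y*Real.cos θ01) + (a^2 + b^2 + 2*a*b*Real.cos θ02) - (y^2 + b^2 + 2*y*b*Real.cos θ12)) / (2 * Real.sqrt (a^2 + y^2 + 2*a*y*Real.cos θ01) * Real.sqrt (a^2 + b^2 + 2*a*b*Real.cos θ02)))^2) ≤ Real.arccos (((a^2 + y^2 + 2*a*y*Real.cos θ01) + (a^2 + b^2 + 2*a*b*Real.cos θ02) - (y^2 + b^2 + 2*y*b*Real.cos θ12)) / (2 * Real.sqrt (a^2 + y^2 + 2*a*y*Real.cos θ01) * Real.sqrt (a^2 + b^2 + 2*a*b*Real.cos θ02))) := by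
    have h := Real.sin_le (Real.arccos_nonneg (((a^2 + y^2 + 2*a*y*Real.cos θ01) + (a^2 + b^2 + 2*a*b*Real.cos θ02) - (y^2 + b^2 + 2*y*b*Real.cos θ12)) / (2 * Real.sqrt (a^2 + y^2 + 2*a*y*Real.cos θ01) * Real.sqrt (a^2 + b^2 + 2*a*b*Real.cos θ02))))
    rwa [Real.sin_arccos] at h
  refine le_trans ?_ (by linarith : 2*Real.sqrt (1 - (((a^2 + y^2 + 2*a*y*Real.cos θ01) + (a^2 + b^2 + 2*a*b*Real.cos θ02) - (y^2 + b^2 + 2*y*b*Real.cos θ12)) / (2 * Real.sqrt (a^2 + y^2 + 2*a*y*Real.cos θ01) * Real.sqrt (a^2 + b^2 + 2*a*b*Real.cos θ02)))^2) ≤ 2*Real.arccos (((a^2 + y^2 + 2*a*y*Real.cos θ01) + (a^2 + b^2 + 2*a*b*Real.cos θ02) - (y^2 + b^2 + 2*y*b*Real.cos θ12)) / (2 * Real.sqrt (a^2 + y^2 + 2*a*y*Real.cos θ01) * Real.sqrt (a^2 + b^2 + 2*a*b*Real.cos θ02))))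
  rw [show -(1/Real.sqrt (1 - (((a^2 + y^2 + 2*a*y*Real.cos θ01) + (a^2 + b^2 + 2*a*b*Real.cos θ02) - (y^2 + b^2 + 2*y*b*Real.cos θ12)) / (2 * Real.sqrt (a^2 + y^2 + 2*a*y*Real.cos θ01) * Real.sqrt (a^2 + b^2 + 2*a*b*Real.cos θ02)))^2)) * ((((2*y^2 + 2*a*y*Real.cos θ01) - (2*y^2 + 2*y*b*Real.cos θ12))*(2*(Real.sqrt (a^2 + y^2 + 2*a*y*Real.cos θ01))^2*Real.sqrt (a^2 + b^2 + 2*a*b*Real.cos θ02)) - ((a^2 + y^2 + 2*a*y*Real.cos θ01) + (a^2 + b^2 + 2*a*b*Real.cos θ02) - (y^2 + b^2 + 2*y*b*Real.cos θ12))*((2*y^2 + 2*a*y*Real.cos θ01)*Real.sqrt (a^2 + b^2 + 2*a*b*Real.cos θ02))) / (Real.sqrt (a^2 + y^2 + 2*a*y*Real.cos θ01)*(2*Real.sqrt (a^2 + y^2 + 2*a*y*Real.cos θ01)*Real.sqrt (a^2 + b^2 + 2*a*b*Real.cos θ02))^2))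
      = (-((((2*y^2 + 2*a*y*Real.cos θ01) - (2*y^2 + 2*y*b*Real.cos θ12))*(2*(Real.sqrt (a^2 + y^2 + 2*a*y*Real.cos θ01))^2*Real.sqrt (a^2 + b^2 + 2*a*b*Real.cos θ02)) - ((a^2 + y^2 + 2*a*y*Real.cos θ01) + (a^2 + b^2 + 2*a*b*Real.cos θ02) - (y^2 + b^2 + 2*y*b*Real.cos θ12))*((2*y^2 + 2*a*y*Real.cos θ01)*Real.sqrt (a^2 + b^2 + 2*a*b*Real.cos θ02))) / (Real.sqrt (a^2 + y^2 + 2*a*y*Real.cos θ01)*(2*Real.sqrt (a^2 + y^2 + 2*a*y*Real.cos θ01)*Real.sqrt (a^2 + b^2 + 2*a*b*Real.cos θ02))^2)))/Real.sqrt (1 - (((a^2 + y^2 + 2*a*y*Real.cos θ01) + (a^2 + b^2 + 2*a*b*Real.cos θ02) - (y^2 + b^2 + 2*y*b*Real.cos θ12)) / (2 * Real.sqrt (a^2 + y^2 + 2*a*y*Real.cos θ01) * Real.sqrt (a^2 + b^2 + 2*a*b*Real.cos θ02)))^2) by ring, div_le_iff₀ hspos]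
  rw [show 2*Real.sqrt (1 - (((a^2 + y^2 + 2*a*y*Real.cos θ01) + (a^2 + b^2 + 2*a*b*Real.cos θ02) - (y^2 + b^2 + 2*y*b*Real.cos θ12)) / (2 * Real.sqrt (a^2 + y^2 + 2*a*y*Real.cos θ01) * Real.sqrt (a^2 + b^2 + 2*a*b*Real.cos θ02)))^2)*Real.sqrt (1 - (((a^2 + y^2 + 2*a*y*Real.cos θ01) + (a^2 + b^2 + 2*a*b*Real.cos θ02) - (y^2 + b^2 + 2*y*b*Real.cos θ12)) / (2 * Real.sqrt (a^2 + y^2 + 2*a*y*Real.cos θ01) * Real.sqrt (a^2 + b^2 + 2*a*b*Real.cos θ02)))^2)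
      = 2*((Real.sqrt (1 - (((a^2 + y^2 + 2*a*y*Real.cos θ01) + (a^2 + b^2 + 2*a*b*Real.cos θ02) - (y^2 + b^2 + 2*y*b*Real.cos θ12)) / (2 * Real.sqrt (a^2 + y^2 + 2*a*y*Real.cos θ01) * Real.sqrt (a^2 + b^2 + 2*a*b*Real.cos θ02)))^2))^2) by ring, Real.sq_sqrt h1Q.le]
  rw [show -((((2*y^2 + 2*a*y*Real.cos θ01) - (2*y^2 + 2*y*b*Real.cos θ12))*(2*(Real.sqrt (a^2 + y^2 + 2*a*y*Real.cos θ01))^2*Real.sqrt (a^2 + b^2 + 2*a*b*Real.cos θ02)) - ((a^2 + y^2 + 2*a*y*Real.cos θ01) + (a^2 + b^2 + 2*a*b*Real.cos θ02) - (y^2 + b^2 + 2*y*b*Real.cos θ12))*((2*y^2 + 2*a*y*Real.cos θ01)*Real.sqrt (a^2 + b^2 + 2*a*b*Real.cos θ02))) / (Real.sqrt (a^2 + y^2 + 2*a*y*Real.cos θ01)*(2*Real.sqrt (a^2 + y^2 + 2*a*y*Real.cos θ01)*Real.sqrt (a^2 + b^2 + 2*a*b*Real.cos θ02))^2)) = (((a^2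 + y^2 + 2*a*y*Real.cos θ01) + (a^2 + b^2 + 2*a*b*Real.cos θ02) - (y^2 + b^2 + 2*y*b*Real.cos θ12))*((2*y^2 + 2*a*y*Real.cos θ01)*Real.sqrt (a^2 + b^2 + 2*a*b*Real.cos θ02)) - ((2*y^2 + 2*a*y*Real.cos θ01) - (2*y^2 + 2*y*b*Real.cos θ12))*(2*(Real.sqrt (a^2 + y^2 + 2*a*y*Real.cos θ01))^2*Real.sqrt (a^2 + b^2 + 2*a*b*Real.cos θ02))) / (Real.sqrt (a^2 + y^2 + 2*a*y*Real.cos θ01)*(2*Real.sqrt (a^2 + y^2 + 2*a*y*Real.cos θ01)*Real.sqrt (a^2 + b^2 + 2*a*b*Real.cos θ02))^2) by ring]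
  have hDpos : 0 < Real.sqrt (a^2 + y^2 + 2*a*y*Real.cos θ01)*(2*Real.sqrt (a^2 + y^2 + 2*a*y*Real.cos θ01)*Real.sqrt (a^2 + b^2 + 2*a*b*Real.cos θ02))^2 :=
    mul_pos hsA (pow_pos (mul_pos (mul_pos two_pos hsA) hsV) 2)
  rw [div_le_iff₀ hDpos]
  have h4 : (2 * Real.sqrt (a^2 + y^2 + 2*a*y*Real.cos θ01) * Real.sqrt (a^2 + b^2 + 2*a*b*Real.cos θ02))^2 = 4*((a^2 + y^2 + 2*a*y*Real.cos θ01)*(a^2 + b^2 + 2*a*b*Real.cos θ02)) := by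
    rw [show (2 * Real.sqrt (a^2 + y^2 + 2*a*y*Real.cos θ01) * Real.sqrt (a^2 + b^2 + 2*a*b*Real.cos θ02))^2 = 4*((Real.sqrt (a^2 + y^2 + 2*a*y*Real.cos θ01))^2*(Real.sqrt (a^2 + b^2 + 2*a*b*Real.cos θ02))^2) by ring, hu2, hv2]
  rw [div_pow, h4]
  have hAV : (0:ℝ) < (a^2 + y^2 + 2*a*y*Real.cos θ01)*(a^2 + b^2 + 2*a*b*Real.cos θ02) := mul_pos hApos hVpos
  rw [show 2*(1 - ((a^2 + y^2 + 2*a*y*Real.cos θ01) + (a^2 + b^2 + 2*a*b*Real.cos θ02) - (y^2 + b^2 + 2*y*b*Real.cos θ12))^2/(4*((a^2 + y^2 + 2*a*y*Real.cos θ01)*(a^2 + b^2 + 2*a*b*Real.cos θ02))))*(Real.sqrt (a^2 + y^2 + 2*a*y*Real.cos θ01)*(4*((a^2 + y^2 + 2*a*y*Real.cos θ01)*(a^2 + b^2 + 2*a*b*Real.cos θ02))))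
      = (8*((a^2 + y^2 + 2*a*y*Real.cos θ01)*(a^2 + b^2 + 2*a*b*Real.cos θ02)) - 2*((a^2 + y^2 + 2*a*y*Real.cos θ01) + (a^2 + b^2 + 2*a*b*Real.cos θ02) - (y^2 + b^2 + 2*y*b*Real.cos θ12))^2)*Real.sqrt (a^2 + y^2 + 2*a*y*Real.cos θ01) by field_simp; ring]
  rw [show ((a^2 + y^2 + 2*a*y*Real.cos θ01) + (a^2 + b^2 + 2*a*b*Real.cos θ02) - (y^2 + b^2 + 2*y*b*Real.cos θ12))*((2*y^2 + 2*a*y*Real.cos θ01)*Real.sqrt (a^2 + b^2 + 2*a*b*Real.cos θ02)) - ((2*y^2 + 2*a*y*Real.cos θ01) - (2*y^2 + 2*y*b*Real.cos θ12))*(2*(Real.sqrt (a^2 + y^2 + 2*a*y*Real.cos θ01))^2*Real.sqrt (a^2 + b^2 + 2*a*b*Real.cos θ02))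
      = ((a^2 + y^2 + 2*a*y*Real.cos θ01) + (a^2 + b^2 + 2*a*b*Real.cos θ02) - (y^2 + b^2 + 2*y*b*Real.cos θ12))*((2*y^2 + 2*a*y*Real.cos θ01)*Real.sqrt (a^2 + b^2 + 2*a*b*Real.cos θ02)) - ((2*y^2 + 2*a*y*Real.cos θ01) - (2*y^2 + 2*y*b*Real.cos θ12))*(2*((Real.sqrt (a^2 + y^2 + 2*a*y*Real.cos θ01))^2)*Real.sqrt (a^2 + b^2 + 2*a*b*Real.cos θ02)) by ring, hu2]
  have hkey := stmt3_key a y b (Real.cos θ01) (Real.cos θ02) (Real.cos θ12)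
    (Real.sqrt (a^2 + y^2 + 2*a*y*Real.cos θ01)) (Real.sqrt (a^2 + b^2 + 2*a*b*Real.cos θ02)) ha hy hb h10 h11 h20 h21 h30 h31 hsA hsV hu2 hv2
  linarith [hkey]
end

section
/- Let G_μ be a connected recurrent electrical network (resistance from any finite nonempty vertex set to infinity is infinite) with all edge conductances positive. Then every bounded harmonic function h : V → ℝ on G_μ is constant. -/
open ENNReal

variable {V : Type*}

/-- An infinite path in `G` starting at `v₀` and passing through infinitely
many vertices. -/
def InfPath (G : SimpleGraph V) (v₀ : V) (p : ℕ → V) : Prop :=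
  p 0 = v₀ ∧ (∀ n, G.Adj (p n) (p (n + 1))) ∧ (Set.range p).Infinite

/-- The μ-energy of an edge metric `m`. -/
noncomputable def eEnergy (G : SimpleGraph V) (μ : Sym2 V → ℝ) (m : Sym2 V → NNReal) : ℝ≥0∞ :=
  ∑' e : G.edgeSet, ENNReal.ofReal (μ e) * (m e : ℝ≥0∞) ^ 2

/-- The conductance from `v₀` to infinity in the network `G_μ`: the infimum of
energies of edge metrics `m` giving length at least `1` to every infinite path
from `v₀`. -/
noncomputable def condToInfty (G : SimpleGraph V) (μ : Sym2 V → ℝ) (v₀ : V) : ℝ≥0∞ :=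
  ⨅ (m : Sym2 V → NNReal)
    (_ : ∀ p : ℕ → V, InfPath G v₀ p → 1 ≤ ∑' n, (m s(p n, p (n + 1)) : ℝ≥0∞)),
    eEnergy G μ m

namespace Stmt9Aux

open NNReal

variable {V : Type*} {G : SimpleGraph V}

noncomputable def wlen (m : Sym2 V → NNReal) {a b : V} (p : G.Walk a b) : NNReal :=
  (p.edges.map m).sum

noncomputable def lsum (m : Sym2 V → NNReal) : List V → NNReal
  | [] => 0
  | [_] => 0
  | a :: b :: r => m s(a, b) + lsum m (b :: r)

variable {α : Type*}

lemma lsum_support (m : Sym2 V → NNReal) : ∀ {a b : V} (p : G.Walk a b),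
    lsum m p.support = wlen m p := by
  intro a b p
  induction p with
  | nil => simp [lsum, wlen]
  | @cons u v w huv p ih =>
    rw [SimpleGraph.Walk.support_cons, p.support_eq_cons]
    show m s(u, v) + lsum m (v :: p.support.tail) = _
    rw [← p.support_eq_cons, ih]
    simp [wlen]

lemma lsum_le_of_prefix (m : Sym2 V → NNReal) :
    ∀ (l₁ l₂ : List V), l₁ <+: l₂ → lsum m l₁ ≤ lsum m l₂ := by
  intro l₁
  induction l₁ with
  | nil => intro l₂ _; exact zero_le
  | cons a l ih =>
    intro l₂ hp
    obtain ⟨t, rfl⟩ := hp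
    cases l with
    | nil => exact zero_le
    | cons b r =>
      show m s(a, b) + lsum m (b :: r) ≤ lsum m ((a :: b :: r) ++ t)
      have : (a :: b :: r) ++ t = a :: b :: (r ++ t) := rfl
      rw [this]
      show m s(a, b) + lsum m (b :: r) ≤ m s(a, b) + lsum m (b :: (r ++ t))
      exact add_le_add_right (ih _ ⟨t, rfl⟩) _

lemma lsum_append_singleton (m : Sym2 V → NNReal) :
    ∀ (l : List V) (hl : l ≠ []) (a : V),
      lsum m (l ++ [a]) = lsum m l + m s(l.getLast hl, a) := by
  intro l
  induction l with
  | nil => intro hl; exact absurd rfl hl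
  | cons b r ih =>
    intro _ a
    cases r with
    | nil => simp [lsum, add_comm]
    | cons c s =>
      show lsum m (b :: c :: (s ++ [a])) = lsum m (b :: c :: s) + _
      show m s(b, c) + lsum m ((c :: s) ++ [a]) = m s(b, c) + lsum m (c :: s) + _
      rw [ih (by simp) a, add_assoc]
      rfl



lemma toFinset_sum_le [DecidableEq α] (f : α → NNReal) (l : List α) :
    ∑ e ∈ l.toFinset, f e ≤ (l.map f).sum := by
  induction l with
  | nil => simp
  | cons a t ih =>
    rw [List.toFinset_cons, List.map_cons, List.sum_cons]
    by_cases ha : a ∈ t.toFinset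
    · rw [Finset.insert_eq_self.mpr ha]
      exact le_add_left ih
    · rw [Finset.sum_insert ha]
      exact add_le_add_right ih _

lemma list_sum_le_of_nodup_subset [DecidableEq α] (f : α → NNReal) {l₁ l₂ : List α}
    (h₁ : l₁.Nodup) (hsub : l₁ ⊆ l₂) : (l₁.map f).sum ≤ (l₂.map f).sum := by
  rw [← List.sum_toFinset _ h₁]
  refine le_trans (Finset.sum_le_sum_of_subset ?_) (toFinset_sum_le f l₂)
  intro e he
  rw [List.mem_toFinset] at *
  exact hsub he

lemma wlen_bypass_le [DecidableEq V] (m : Sym2 V → NNReal) {a b : V} (p : G.Walk a b) :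
    wlen m p.bypass ≤ wlen m p :=
  list_sum_le_of_nodup_subset m p.bypass_isPath.edges_nodup p.edges_bypass_subset

/-- The set of endpoints of short paths extending the list `l`. -/
def GoodSet (G : SimpleGraph V) (m : Sym2 V → NNReal) (x : V) (l : List V) : Set V :=
  {v | ∃ p : G.Walk x v, p.IsPath ∧ wlen m p ≤ 1/2 ∧ l <+: p.support}

def Good (G : SimpleGraph V) (m : Sym2 V → NNReal) (x : V) (l : List V) : Prop :=
  l ≠ [] ∧ (GoodSet G m x l).Infinite

lemma good_nil [DecidableEq V] (m : Sym2 V → NNReal) (x : V)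
    (hS : {v : V | ∃ p : G.Walk x v, wlen m p ≤ 1/2}.Infinite) : Good G m x [x] := by
  refine ⟨List.cons_ne_nil _ _, hS.mono ?_⟩
  rintro v ⟨p, hp⟩
  refine ⟨p.bypass, p.bypass_isPath, le_trans (wlen_bypass_le m p) hp, ?_⟩
  exact ⟨p.bypass.support.tail, by rw [List.singleton_append, ← SimpleGraph.Walk.support_eq_cons]⟩

lemma good_extend [G.LocallyFinite] [DecidableEq V] (m : Sym2 V → NNReal) (x : V)
    (l : List V) (hl : Good G m x l) : ∃ a, Good G m x (l ++ [a]) := by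
  by_contra hno
  push_neg at hno
  have hfin : ∀ a, (GoodSet G m x (l ++ [a])).Finite := by
    intro a
    have h2 := hno a
    rw [Good, not_and_or] at h2
    rcases h2 with h2 | h2
    · exact absurd (by simp) h2
    · exact Set.not_infinite.mp h2
  have hsub : GoodSet G m x l ⊆
      {l.getLast hl.1} ∪ ⋃ a ∈ (G.neighborFinset (l.getLast hl.1) : Set V),
        GoodSet G m x (l ++ [a]) := by
    rintro v ⟨q, hq, hwl, t, ht⟩
    cases t with
    | nil =>
      left
      have hql : q.support = l := by rw [← ht, List.append_nil]
      subst hql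
      exact Set.mem_singleton_iff.mpr q.getLast_support.symm
    | cons a t' =>
      right
      have hpre : (l ++ [a]) <+: q.support := ⟨t', by rw [← ht]; simp⟩
      have hadj : G.Adj (l.getLast hl.1) a := by
        have hinf : [l.getLast hl.1, a] <:+: q.support := by
          refine ⟨l.dropLast, t', ?_⟩
          rw [← ht]
          conv_rhs => rw [← List.dropLast_append_getLast hl.1]
          simp
        have hch := (q.isChain_adj_support).infix hinf
        simpa [List.isChain_cons_cons] using hch
      refine Set.mem_biUnion ?_ ⟨q, hq, hwl, hpre⟩
      simpa using hadj
  exact hl.2 (Set.Finite.subset (Set.Finite.union (Set.finite_singleton _)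
    (Set.Finite.biUnion (G.neighborFinset _).finite_toSet fun a _ => hfin a)) hsub)

variable [G.LocallyFinite] [DecidableEq V] (m : Sym2 V → NNReal) (x : V)

noncomputable def kseq (h0 : Good G m x [x]) : ℕ → {l : List V // Good G m x l}
  | 0 => ⟨[x], h0⟩
  | n+1 =>
    let l := kseq h0 n
    ⟨l.1 ++ [Classical.choose (good_extend m x l.1 l.2)],
      Classical.choose_spec (good_extend m x l.1 l.2)⟩

lemma kseq_succ (h0 : Good G m x [x]) (n : ℕ) :
    ∃ a, (kseq m x h0 (n+1)).1 = (kseq m x h0 n).1 ++ [a] := ⟨_, rfl⟩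

lemma kseq_len (h0 : Good G m x [x]) : ∀ n, (kseq m x h0 n).1.length = n + 1
  | 0 => rfl
  | n+1 => by
    obtain ⟨a, ha⟩ := kseq_succ m x h0 n
    rw [ha, List.length_append, kseq_len h0 n]
    rfl

lemma kseq_prefix (h0 : Good G m x [x]) (n : ℕ) :
    ∀ k, n ≤ k → (kseq m x h0 n).1 <+: (kseq m x h0 k).1 := by
  intro k hk
  induction k, hk using Nat.le_induction with
  | base => exact List.prefix_refl _
  | succ k hk ih =>
    obtain ⟨a, ha⟩ := kseq_succ m x h0 k
    rw [ha]
    exact ih.trans ⟨[a], rfl⟩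

noncomputable def kp (h0 : Good G m x [x]) (n : ℕ) : V :=
  ((kseq m x h0 n).1).getLast ((kseq m x h0 n).2.1)

lemma kp_getElem (h0 : Good G m x [x]) {n k : ℕ} (hnk : n ≤ k)
    (hh : n < (kseq m x h0 k).1.length) : ((kseq m x h0 k).1)[n]'hh = kp m x h0 n := by
  have hlt : n < (kseq m x h0 n).1.length := by rw [kseq_len]; omega
  rw [← (kseq_prefix m x h0 n k hnk).getElem hlt]
  rw [kp, List.getLast_eq_getElem]
  congr 1
  rw [kseq_len]
  omega

lemma kp_zero (h0 : Good G m x [x]) : kp m x h0 0 = x := rfl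

lemma kp_adj (h0 : Good G m x [x]) (n : ℕ) : G.Adj (kp m x h0 n) (kp m x h0 (n+1)) := by
  obtain ⟨v, q, hq, hwl, hpre⟩ := (kseq m x h0 (n+1)).2.2.nonempty
  have hlen : n + 2 ≤ q.support.length := by
    have := hpre.length_le
    rw [kseq_len] at this
    omega
  have hch := List.isChain_iff_getElem.mp q.isChain_adj_support n (by omega)
  have e1 : q.support[n]'(by omega) = kp m x h0 n := by
    rw [← hpre.getElem (by rw [kseq_len]; omega)]
    exact kp_getElem m x h0 (by omega) _
  have e2 : q.support[n+1]'(by omega) = kp m x h0 (n+1) := by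
    rw [← hpre.getElem (by rw [kseq_len]; omega)]
    exact kp_getElem m x h0 (by omega) _
  rwa [e1, e2] at hch

lemma kp_inj (h0 : Good G m x [x]) : Function.Injective (kp m x h0) := by
  have key : ∀ n k, n < k → kp m x h0 n ≠ kp m x h0 k := by
    intro n k hnk
    obtain ⟨v, q, hq, hwl, hpre⟩ := (kseq m x h0 k).2.2.nonempty
    have hnd : (kseq m x h0 k).1.Nodup := (hpre.sublist).nodup hq.support_nodup
    have e1 := kp_getElem m x h0 (le_of_lt hnk) (by rw [kseq_len]; omega)
    have e2 := kp_getElem m x h0 (le_refl k) (by rw [kseq_len]; omega)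
    rw [← e1, ← e2]
    intro hcon
    have := (hnd.getElem_inj_iff).mp hcon
    omega
  intro a b hab
  by_contra hne
  rcases lt_or_gt_of_ne hne with hlt | hlt
  · exact key a b hlt hab
  · exact key b a hlt hab.symm

lemma kp_lsum (h0 : Good G m x [x]) :
    ∀ n, lsum m (kseq m x h0 n).1 = ∑ k ∈ Finset.range n, m s(kp m x h0 k, kp m x h0 (k+1))
  | 0 => by simp [kseq, lsum]
  | n+1 => by
    obtain ⟨a, ha⟩ := kseq_succ m x h0 n
    have hlast : kp m x h0 (n+1) = a := by
      rw [kp]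
      simp only [ha]
      exact List.getLast_append _
    rw [ha, lsum_append_singleton m _ (kseq m x h0 n).2.1, kp_lsum h0 n,
      Finset.sum_range_succ, ← hlast]
    rfl

lemma kp_sum_le (h0 : Good G m x [x]) (n : ℕ) : lsum m (kseq m x h0 n).1 ≤ 1/2 := by
  obtain ⟨v, q, hq, hwl, hpre⟩ := (kseq m x h0 n).2.2.nonempty
  calc lsum m (kseq m x h0 n).1 ≤ lsum m q.support := lsum_le_of_prefix m _ _ hpre
  _ = wlen m q := lsum_support m q
  _ ≤ 1/2 := hwl

lemma finite_short
    (hH : ∀ p : ℕ → V, InfPath G x p → 1 ≤ ∑' n, (m s(p n, p (n + 1)) : ℝ≥0∞)) :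
    {v : V | ∃ p : G.Walk x v, wlen m p ≤ 1/2}.Finite := by
  by_contra hinf
  have h0 : Good G m x [x] := good_nil m x hinf
  have hip : InfPath G x (kp m x h0) :=
    ⟨kp_zero m x h0, kp_adj m x h0, Set.infinite_range_of_injective (kp_inj m x h0)⟩
  have h1 := hH _ hip
  have h2 : (∑' n, (m s(kp m x h0 n, kp m x h0 (n + 1)) : ℝ≥0∞)) ≤ 1/2 := by
    apply ENNReal.tsum_le_of_sum_range_le
    intro n
    rw [← ENNReal.coe_finset_sum, ← kp_lsum m x h0 n]
    refine le_trans (ENNReal.coe_le_coe.mpr (kp_sum_le m x h0 n)) ?_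
    rw [ENNReal.coe_div (by norm_num)]
    simp
  have := le_trans h1 h2
  norm_num at this

end Stmt9Aux

namespace Stmt9Aux

open NNReal

variable {V : Type*} {G : SimpleGraph V}

noncomputable def edist (G : SimpleGraph V) (m : Sym2 V → NNReal) (x v : V) : ℝ≥0∞ :=
  ⨅ p : G.Walk x v, (wlen m p : ℝ≥0∞)

lemma edist_self (m : Sym2 V → NNReal) (x : V) : edist G m x x = 0 := by
  refine le_antisymm (le_trans (iInf_le _ SimpleGraph.Walk.nil) ?_) zero_le
  simp [wlen]

lemma edist_lt_top (hconn : G.Connected) (m : Sym2 V → NNReal) (x v : V) :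
    edist G m x v < ⊤ := by
  obtain ⟨p⟩ := hconn.preconnected x v
  exact lt_of_le_of_lt (iInf_le _ p) (ENNReal.coe_lt_top)

lemma edist_le_adj (m : Sym2 V → NNReal) (x v w : V) (hadj : G.Adj w v) :
    edist G m x v ≤ edist G m x w + (m s(v, w) : ℝ≥0∞) := by
  conv_rhs => rw [edist, ENNReal.iInf_add]
  refine le_iInf fun p => ?_
  refine le_trans (iInf_le _ (p.concat hadj)) ?_
  rw [wlen, SimpleGraph.Walk.edges_concat, List.concat_eq_append, List.map_append,
    List.sum_append]
  simp [wlen, Sym2.eq_swap]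

/-- The cutoff function used in the Caccioppoli argument. -/
noncomputable def cut (G : SimpleGraph V) (m : Sym2 V → NNReal) (x v : V) : ℝ :=
  max (1 - 4 * (edist G m x v).toReal) 0

lemma cut_self (m : Sym2 V → NNReal) (x : V) : cut G m x x = 1 := by
  simp [cut, edist_self]

lemma cut_nonneg (m : Sym2 V → NNReal) (x v : V) : 0 ≤ cut G m x v := le_max_right _ _

lemma cut_lipschitz (hconn : G.Connected) (m : Sym2 V → NNReal) (x v w : V)
    (hadj : G.Adj v w) : |cut G m x v - cut G m x w| ≤ 4 * (m s(v, w) : ℝ) := by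
  have h1 : edist G m x v ≤ edist G m x w + (m s(v, w) : ℝ≥0∞) :=
    edist_le_adj m x v w hadj.symm
  have h2 : edist G m x w ≤ edist G m x v + (m s(v, w) : ℝ≥0∞) := by
    rw [Sym2.eq_swap]
    exact edist_le_adj m x w v hadj
  have hv := edist_lt_top hconn m x v
  have hw := edist_lt_top hconn m x w
  have t1 : (edist G m x v).toReal ≤ (edist G m x w).toReal + (m s(v, w) : ℝ) := by
    have := ENNReal.toReal_mono (by finiteness) h1
    rwa [ENNReal.toReal_add hw.ne ENNReal.coe_ne_top, ENNReal.coe_toReal] at this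
  have t2 : (edist G m x w).toReal ≤ (edist G m x v).toReal + (m s(v, w) : ℝ) := by
    have := ENNReal.toReal_mono (by finiteness) h2
    rwa [ENNReal.toReal_add hv.ne ENNReal.coe_ne_top, ENNReal.coe_toReal] at this
  refine le_trans (abs_max_sub_max_le_abs _ _ _) ?_
  rw [abs_le]
  constructor <;> [skip; skip] <;>
    · have := abs_nonneg ((1 : ℝ))
      linarith

end Stmt9Aux

namespace Stmt9Aux

open NNReal

variable {V : Type*} {G : SimpleGraph V}

lemma cut_support (hconn : G.Connected) (m : Sym2 V → NNReal) (x v : V)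
    (hcv : cut G m x v ≠ 0) : ∃ p : G.Walk x v, wlen m p ≤ 1/2 := by
  have h1 : 0 < 1 - 4 * (edist G m x v).toReal := by
    by_contra hc
    exact hcv (max_eq_right (by linarith)) 
  have h2 : edist G m x v < ((1/2 : ℝ≥0) : ℝ≥0∞) := by
    have hne := (edist_lt_top hconn m x v).ne
    rw [← ENNReal.ofReal_coe_nnreal]
    refine (ENNReal.lt_ofReal_iff_toReal_lt hne).mpr ?_
    push_cast
    linarith
  rw [edist, iInf_lt_iff] at h2
  obtain ⟨p, hp⟩ := h2
  exact ⟨p, le_of_lt (ENNReal.coe_lt_coe.mp hp)⟩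

/-- Discrete Caccioppoli inequality on a finite vertex set. -/
lemma caccioppoli (A : Finset V) (W : V → V → ℝ) (hWs : ∀ v w, W v w = W w v)
    (hW0 : ∀ v w, 0 ≤ W v w) (F f : V → ℝ) (M : ℝ)
    (hM : ∀ v, |f v| ≤ M) (hF0 : ∀ v, 0 ≤ F v)
    (hharm : ∀ v ∈ A, F v ≠ 0 → ∑ w ∈ A, W v w * (f w - f v) = 0) :
    ∑ v ∈ A, ∑ w ∈ A, W v w * ((F v ^ 2 + F w ^ 2) / 2) * (f v - f w) ^ 2
      ≤ 4 * M ^ 2 * ∑ v ∈ A, ∑ w ∈ A, W v w * (F v - F w) ^ 2 := by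
  classical
  set φ : V → ℝ := fun v => F v ^ 2 * f v with hφ
  set L := ∑ v ∈ A, ∑ w ∈ A, W v w * ((F v ^ 2 + F w ^ 2) / 2) * (f v - f w) ^ 2 with hL
  set D := ∑ v ∈ A, ∑ w ∈ A, W v w * (F v - F w) ^ 2 with hD
  set R := ∑ v ∈ A, ∑ w ∈ A, W v w * ((F v ^ 2 - F w ^ 2) / 2) * (f v + f w) * (f v - f w)
    with hR
  -- Step 1 : L + R = 0
  have hT1 : ∀ g : V → V → ℝ, (∀ v w, g v w = φ v * (f v - f w)) →
      ∑ v ∈ A, ∑ w ∈ A, W v w * g v w = 0 := by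
    intro g hg
    refine Finset.sum_eq_zero fun v hv => ?_
    by_cases hFv : F v = 0
    · refine Finset.sum_eq_zero fun w _ => ?_
      rw [hg, hφ]
      simp [hFv]
    · have := hharm v hv hFv
      calc ∑ w ∈ A, W v w * g v w = -(φ v * ∑ w ∈ A, W v w * (f w - f v)) := by
            rw [Finset.mul_sum, ← Finset.sum_neg_distrib]
            exact Finset.sum_congr rfl fun w _ => by rw [hg]; ring
      _ = 0 := by rw [this]; ring
  have hLR : L + R = 0 := by
    have e1 : L + R = ∑ v ∈ A, ∑ w ∈ A, W v w * ((φ v - φ w) * (f v - f w)) := by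
      rw [hL, hR, ← Finset.sum_add_distrib]
      refine Finset.sum_congr rfl fun v _ => ?_
      rw [← Finset.sum_add_distrib]
      refine Finset.sum_congr rfl fun w _ => ?_
      rw [hφ]
      ring
    have e2 : ∑ v ∈ A, ∑ w ∈ A, W v w * (φ v * (f v - f w)) = 0 :=
      hT1 _ (fun v w => rfl)
    have e3 : ∑ v ∈ A, ∑ w ∈ A, W v w * (φ w * (f v - f w)) = 0 := by
      rw [Finset.sum_comm]
      have : ∑ w ∈ A, ∑ v ∈ A, W v w * (φ w * (f v - f w))
          = ∑ w ∈ A, ∑ v ∈ A, W w v * (-(φ w * (f w - f v))) := by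
        refine Finset.sum_congr rfl fun w _ => Finset.sum_congr rfl fun v _ => ?_
        rw [hWs w v]
        ring
      rw [this]
      have := hT1 (fun w v => -(φ w * (f w - f v)))
      rw [← neg_eq_zero, ← Finset.sum_neg_distrib]
      rw [← hT1 (fun w v => φ w * (f w - f v)) (fun v w => rfl)]
      refine Finset.sum_congr rfl fun w _ => ?_
      rw [← Finset.sum_neg_distrib]
      exact Finset.sum_congr rfl fun v _ => by ring
    rw [e1]
    have : ∀ v ∈ A, ∀ w ∈ A, W v w * ((φ v - φ w) * (f v - f w))
        = W v w * (φ v * (f v - f w)) - W v w * (φ w * (f v - f w)) := by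
      intro v _ w _; ring
    calc ∑ v ∈ A, ∑ w ∈ A, W v w * ((φ v - φ w) * (f v - f w))
        = ∑ v ∈ A, ∑ w ∈ A, (W v w * (φ v * (f v - f w)) - W v w * (φ w * (f v - f w))) := by
          refine Finset.sum_congr rfl fun v hv => Finset.sum_congr rfl fun w hw => this v hv w hw
      _ = 0 := by simp only [Finset.sum_sub_distrib, e2, e3, sub_zero]
  -- Step 2 : Cauchy-Schwarz
  have hL0 : 0 ≤ L := by
    refine Finset.sum_nonneg fun v _ => Finset.sum_nonneg fun w _ => ?_
    have := hF0 v; have := hF0 w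
    have := hW0 v w
    positivity
  have hD0 : 0 ≤ D := by
    refine Finset.sum_nonneg fun v _ => Finset.sum_nonneg fun w _ => ?_
    have := hW0 v w
    positivity
  set fq : V × V → ℝ := fun q => Real.sqrt (W q.1 q.2) * |F q.1 - F q.2| with hfq
  set gq : V × V → ℝ := fun q =>
    Real.sqrt (W q.1 q.2) * ((F q.1 + F q.2) / 2) * |f q.1 + f q.2| * |f q.1 - f q.2| with hgq
  set C := ∑ q ∈ A ×ˢ A, fq q * gq q with hC
  have hRC : -R ≤ C := by
    rw [hC, Finset.sum_product, hR, ← Finset.sum_neg_distrib]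
    refine Finset.sum_le_sum fun v _ => ?_
    rw [← Finset.sum_neg_distrib]
    refine Finset.sum_le_sum fun w _ => ?_
    refine le_trans (neg_le_abs _) (le_of_eq ?_)
    have habs : |(F v ^ 2 - F w ^ 2) / 2| = |F v - F w| * ((F v + F w) / 2) := by
      rw [show (F v ^ 2 - F w ^ 2) / 2 = (F v - F w) * ((F v + F w) / 2) by ring, abs_mul,
        abs_of_nonneg (div_nonneg (add_nonneg (hF0 v) (hF0 w)) (by norm_num))]
    calc |W v w * ((F v ^ 2 - F w ^ 2) / 2) * (f v + f w) * (f v - f w)|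
        = W v w * (|F v - F w| * ((F v + F w) / 2)) * |f v + f w| * |f v - f w| := by
          rw [abs_mul, abs_mul, abs_mul, abs_of_nonneg (hW0 v w), habs]
      _ = fq (v, w) * gq (v, w) := by
          show _ = Real.sqrt (W v w) * |F v - F w| *
            (Real.sqrt (W v w) * ((F v + F w) / 2) * |f v + f w| * |f v - f w|)
          rw [show Real.sqrt (W v w) * |F v - F w| *
            (Real.sqrt (W v w) * ((F v + F w) / 2) * |f v + f w| * |f v - f w|)
            = Real.sqrt (W v w) * Real.sqrt (W v w) *
              (|F v - F w| * ((F v + F w) / 2) * |f v + f w| * |f v - f w|) from by ring,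
            Real.mul_self_sqrt (hW0 v w)]
          ring
  have hfq2 : ∑ q ∈ A ×ˢ A, fq q ^ 2 = D := by
    rw [hD, Finset.sum_product]
    refine Finset.sum_congr rfl fun v _ => Finset.sum_congr rfl fun w _ => ?_
    rw [hfq]
    dsimp only
    rw [mul_pow, sq_abs, Real.sq_sqrt (hW0 v w)]
  have hgq2 : ∑ q ∈ A ×ˢ A, gq q ^ 2 ≤ 4 * M ^ 2 * L := by
    rw [hL, Finset.sum_product]
    rw [Finset.mul_sum]
    refine Finset.sum_le_sum fun v _ => ?_
    rw [Finset.mul_sum]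
    refine Finset.sum_le_sum fun w _ => ?_
    have hM0 : 0 ≤ M := le_trans (abs_nonneg (f v)) (hM v)
    have t1 : ((F v + F w) / 2) ^ 2 ≤ (F v ^ 2 + F w ^ 2) / 2 := by
      nlinarith [sq_nonneg (F v - F w)]
    have t2 : (f v + f w) ^ 2 ≤ (2 * M) ^ 2 := by
      have h1 := hM v
      have h2 := hM w
      rw [abs_le] at h1 h2
      nlinarith
    have q1 : ((F v + F w) / 2) ^ 2 * (f v + f w) ^ 2
        ≤ ((F v ^ 2 + F w ^ 2) / 2) * (2 * M) ^ 2 := by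
      refine mul_le_mul t1 t2 (sq_nonneg _) ?_
      have := hF0 v; have := hF0 w
      positivity
    rw [hgq]
    dsimp only
    calc (Real.sqrt (W v w) * ((F v + F w) / 2) * |f v + f w| * |f v - f w|) ^ 2
        = W v w * (((F v + F w) / 2) ^ 2 * (f v + f w) ^ 2) * (f v - f w) ^ 2 := by
          rw [mul_pow, mul_pow, mul_pow, sq_abs, sq_abs, Real.sq_sqrt (hW0 v w)]
          ring
      _ ≤ W v w * (((F v ^ 2 + F w ^ 2) / 2) * (2 * M) ^ 2) * (f v - f w) ^ 2 := by
          refine mul_le_mul_of_nonneg_right (mul_le_mul_of_nonneg_left q1 (hW0 v w))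
            (sq_nonneg _)
      _ = 4 * M ^ 2 * (W v w * ((F v ^ 2 + F w ^ 2) / 2) * (f v - f w) ^ 2) := by ring
  have hCS := Finset.sum_mul_sq_le_sq_mul_sq (A ×ˢ A) fq gq
  rw [hfq2, ← hC] at hCS
  have hLC : L ≤ C := by
    have : L = -R := by linarith
    linarith
  have hsq : L ^ 2 ≤ D * (4 * M ^ 2 * L) := by
    calc L ^ 2 ≤ C ^ 2 := by
          refine pow_le_pow_left₀ hL0 hLC 2
      _ ≤ D * ∑ q ∈ A ×ˢ A, gq q ^ 2 := hCS
      _ ≤ D * (4 * M ^ 2 * L) := by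
          refine mul_le_mul_of_nonneg_left hgq2 hD0
  rcases eq_or_lt_of_le hL0 with hL | hL
  · rw [← hL]
    exact mul_nonneg (by positivity) hD0
  · nlinarith [hsq, hL]

end Stmt9Aux

namespace Stmt9Aux

open NNReal

variable {V : Type*} {G : SimpleGraph V}

lemma pair_sum_le [DecidableEq V] (T : Finset (V × V)) (g : Sym2 V → ℝ)
    (hg : ∀ e ∈ T.image (fun q : V × V => s(q.1, q.2)), 0 ≤ g e) :
    ∑ q ∈ T, g s(q.1, q.2) ≤ 2 * ∑ e ∈ T.image (fun q : V × V => s(q.1, q.2)), g e := by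
  classical
  rw [Finset.sum_comp g (fun q : V × V => s(q.1, q.2)), Finset.mul_sum]
  refine Finset.sum_le_sum fun e he => ?_
  obtain ⟨q₀, hq₀, rfl⟩ := Finset.mem_image.mp he
  have hsub : T.filter (fun q : V × V => s(q.1, q.2) = s(q₀.1, q₀.2))
      ⊆ {(q₀.1, q₀.2), (q₀.2, q₀.1)} := by
    intro q hq
    have := (Finset.mem_filter.mp hq).2
    rw [Sym2.eq_iff] at this
    rcases this with ⟨h1, h2⟩ | ⟨h1, h2⟩
    · exact Finset.mem_insert.mpr (Or.inl (Prod.ext h1 h2))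
    · exact Finset.mem_insert.mpr (Or.inr (Finset.mem_singleton.mpr (Prod.ext h1 h2)))
  have hcard : (T.filter (fun q : V × V => s(q.1, q.2) = s(q₀.1, q₀.2))).card ≤ 2 :=
    le_trans (Finset.card_le_card hsub) (le_trans (Finset.card_insert_le _ _) (by simp))
  rw [nsmul_eq_mul]
  exact mul_le_mul_of_nonneg_right (by exact_mod_cast hcard) (hg _ he)

lemma energy_finset_le (μ : Sym2 V → ℝ) (m : Sym2 V → NNReal) (A' : Finset (Sym2 V))
    (hA' : ∀ e ∈ A', e ∈ G.edgeSet) (hμ0 : ∀ e ∈ A', 0 ≤ μ e) {δ : ℝ} (hδ : 0 ≤ δ)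
    (hE : (∑' e : G.edgeSet, ENNReal.ofReal (μ e) * ((m e : ℝ≥0∞)) ^ 2) ≤ ENNReal.ofReal δ) :
    ∑ e ∈ A', μ e * (m e : ℝ) ^ 2 ≤ δ := by
  classical
  rw [← ENNReal.ofReal_le_ofReal_iff hδ]
  rw [ENNReal.ofReal_sum_of_nonneg (fun e he => mul_nonneg (hμ0 e he) (sq_nonneg _))]
  have hterm : ∀ e ∈ A', ENNReal.ofReal (μ e * (m e : ℝ) ^ 2)
      = ENNReal.ofReal (μ e) * ((m e : ℝ≥0∞)) ^ 2 := by
    intro e he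
    rw [ENNReal.ofReal_mul (hμ0 e he), ENNReal.ofReal_pow (m e).coe_nonneg,
      ENNReal.ofReal_coe_nnreal]
  rw [Finset.sum_congr rfl hterm]
  refine le_trans ?_ hE
  have hinj : Function.Injective (fun e : {x // x ∈ A'} => (⟨e.1, hA' e.1 e.2⟩ : G.edgeSet)) := by
    intro e1 e2 h12
    exact Subtype.ext (congrArg (Subtype.val : G.edgeSet → Sym2 V) h12)
  refine le_trans (le_of_eq ?_)
    (ENNReal.sum_le_tsum (A'.attach.map ⟨fun e => ⟨e.1, hA' e.1 e.2⟩, hinj⟩))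
  rw [Finset.sum_map]
  exact (Finset.sum_attach A' (fun e => ENNReal.ofReal (μ e) * ((m e : ℝ≥0∞)) ^ 2)).symm

end Stmt9Aux

namespace Stmt9Aux

open NNReal

variable {V : Type*} {G : SimpleGraph V}

lemma edge_step [G.LocallyFinite] [DecidableEq V] (hconn : G.Connected)
    (μ : Sym2 V → ℝ) (hμ : ∀ e ∈ G.edgeSet, 0 < μ e) (h : V → ℝ) (M : ℝ)
    (hM : ∀ v, |h v| ≤ M)
    (hharm : ∀ v, ∑ w ∈ G.neighborFinset v, μ s(v, w) * (h w - h v) = 0)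
    (a b : V) (hab : G.Adj a b) (m : Sym2 V → NNReal)
    (hcon : ∀ p : ℕ → V, InfPath G a p → 1 ≤ ∑' n, (m s(p n, p (n + 1)) : ℝ≥0∞))
    {δ : ℝ} (hδ : 0 ≤ δ)
    (hE : (∑' e : G.edgeSet, ENNReal.ofReal (μ e) * ((m e : ℝ≥0∞)) ^ 2) ≤ ENNReal.ofReal δ) :
    μ s(a, b) * (h a - h b) ^ 2 ≤ 256 * M ^ 2 * δ := by
  classical
  have hfin : {v : V | ∃ p : G.Walk a v, wlen m p ≤ 1/2}.Finite := finite_short m a hcon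
  set S : Finset V := hfin.toFinset with hS
  set A : Finset V := S ∪ S.biUnion (fun v => G.neighborFinset v) with hA
  set F : V → ℝ := cut G m a with hF
  set W : V → V → ℝ := fun v w => if G.Adj v w then μ s(v, w) else 0 with hW
  have hWs : ∀ v w, W v w = W w v := by
    intro v w
    by_cases hadj : G.Adj v w
    · simp only [hW, if_pos hadj, if_pos hadj.symm]
      rw [Sym2.eq_swap]
    · simp only [hW, if_neg hadj, if_neg (fun hc : G.Adj w v => hadj hc.symm)]
  have hW0 : ∀ v w, 0 ≤ W v w := by
    intro v w
    simp only [hW]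
    by_cases hadj : G.Adj v w
    · rw [if_pos hadj]
      exact (hμ _ (G.mem_edgeSet.mpr hadj)).le
    · rw [if_neg hadj]
  have haS : a ∈ S := by
    rw [hS, Set.Finite.mem_toFinset]
    exact ⟨SimpleGraph.Walk.nil, by simp [wlen]⟩
  have haA : a ∈ A := Finset.mem_union_left _ haS
  have hbA : b ∈ A := by
    refine Finset.mem_union_right _ (Finset.mem_biUnion.mpr ⟨a, haS, ?_⟩)
    exact (SimpleGraph.mem_neighborFinset G a b).mpr hab
  have hsupp : ∀ v, F v ≠ 0 → v ∈ S := by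
    intro v hv
    rw [hS, Set.Finite.mem_toFinset]
    exact cut_support hconn m a v hv
  have hharm' : ∀ v ∈ A, F v ≠ 0 → ∑ w ∈ A, W v w * (h w - h v) = 0 := by
    intro v _ hFv
    have hvS := hsupp v hFv
    have hnb : G.neighborFinset v ⊆ A := fun w hw =>
      Finset.mem_union_right _ (Finset.mem_biUnion.mpr ⟨v, hvS, hw⟩)
    rw [← Finset.sum_subset hnb (fun w _ hwn => by
      simp only [hW]
      rw [if_neg (fun hadj => hwn ((SimpleGraph.mem_neighborFinset G v w).mpr hadj)),
        zero_mul])]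
    rw [← hharm v]
    refine Finset.sum_congr rfl fun w hw => ?_
    simp only [hW]
    rw [if_pos ((SimpleGraph.mem_neighborFinset G v w).mp hw)]
  have hcac := caccioppoli A W hWs hW0 F h M hM (fun v => cut_nonneg m a v) hharm'
  -- lower bound for the single edge term
  have hterm_nonneg : ∀ v ∈ A, ∀ w ∈ A,
      0 ≤ W v w * ((F v ^ 2 + F w ^ 2) / 2) * (h v - h w) ^ 2 := by
    intro v _ w _
    have := hW0 v w
    have := cut_nonneg (G := G) m a v
    have := cut_nonneg (G := G) m a w
    positivity
  have hlow : μ s(a, b) * (h a - h b) ^ 2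
      ≤ 2 * ∑ v ∈ A, ∑ w ∈ A, W v w * ((F v ^ 2 + F w ^ 2) / 2) * (h v - h w) ^ 2 := by
    have h1 : W a b * ((F a ^ 2 + F b ^ 2) / 2) * (h a - h b) ^ 2
        ≤ ∑ w ∈ A, W a w * ((F a ^ 2 + F w ^ 2) / 2) * (h a - h w) ^ 2 :=
      Finset.single_le_sum (fun w hw => hterm_nonneg a haA w hw) hbA
    have h2 : ∑ w ∈ A, W a w * ((F a ^ 2 + F w ^ 2) / 2) * (h a - h w) ^ 2
        ≤ ∑ v ∈ A, ∑ w ∈ A, W v w * ((F v ^ 2 + F w ^ 2) / 2) * (h v - h w) ^ 2 :=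
      Finset.single_le_sum
        (fun v hv => Finset.sum_nonneg fun w hw => hterm_nonneg v hv w hw) haA
    have hFa : F a = 1 := cut_self m a
    have hWab : W a b = μ s(a, b) := by simp only [hW]; rw [if_pos hab]
    have h3 : μ s(a, b) * (h a - h b) ^ 2
        ≤ 2 * (W a b * ((F a ^ 2 + F b ^ 2) / 2) * (h a - h b) ^ 2) := by
      rw [hWab, hFa]
      have := cut_nonneg (G := G) m a b
      nlinarith [(hμ _ (G.mem_edgeSet.mpr hab)).le, sq_nonneg (h a - h b), sq_nonneg (F b),
        mul_nonneg (mul_nonneg (hμ _ (G.mem_edgeSet.mpr hab)).le (sq_nonneg (F b))) (sq_nonneg (h a - h b))]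
    linarith
  -- upper bound for D
  set g : Sym2 V → ℝ := fun e => μ e * (m e : ℝ) ^ 2 with hg
  set T : Finset (V × V) := (A ×ˢ A).filter (fun q : V × V => G.Adj q.1 q.2) with hT
  have hDbound : ∑ v ∈ A, ∑ w ∈ A, W v w * (F v - F w) ^ 2 ≤ 32 * δ := by
    have hstep1 : ∑ v ∈ A, ∑ w ∈ A, W v w * (F v - F w) ^ 2
        ≤ ∑ q ∈ T, 16 * g s(q.1, q.2) := by
      rw [hT, Finset.sum_filter, ← Finset.sum_product']
      refine Finset.sum_le_sum fun q _ => ?_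
      by_cases hadj : G.Adj q.1 q.2
      · simp only [hW, hg]
        rw [if_pos hadj, if_pos hadj]
        have hlip := cut_lipschitz hconn m a q.1 q.2 hadj
        have habs2 : (F q.1 - F q.2) ^ 2 ≤ 16 * (m s(q.1, q.2) : ℝ) ^ 2 := by
          rw [← sq_abs]
          nlinarith [abs_nonneg (F q.1 - F q.2), (m s(q.1, q.2)).coe_nonneg]
        calc μ s(q.1, q.2) * (F q.1 - F q.2) ^ 2
            ≤ μ s(q.1, q.2) * (16 * (m s(q.1, q.2) : ℝ) ^ 2) :=
              mul_le_mul_of_nonneg_left habs2 (hμ _ (G.mem_edgeSet.mpr hadj)).le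
          _ = 16 * (μ s(q.1, q.2) * (m s(q.1, q.2) : ℝ) ^ 2) := by ring
      · simp only [hW]
        rw [if_neg hadj, if_neg hadj, zero_mul]
    have hedges : ∀ e ∈ T.image (fun q : V × V => s(q.1, q.2)), e ∈ G.edgeSet := by
      intro e he
      obtain ⟨q, hq, rfl⟩ := Finset.mem_image.mp he
      exact (Finset.mem_filter.mp hq).2
    have hg0 : ∀ e ∈ T.image (fun q : V × V => s(q.1, q.2)), 0 ≤ g e := by
      intro e he
      rw [hg]
      exact mul_nonneg (hμ _ (hedges e he)).le (sq_nonneg _)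
    have hstep2 : ∑ q ∈ T, g s(q.1, q.2)
        ≤ 2 * ∑ e ∈ T.image (fun q : V × V => s(q.1, q.2)), g e := pair_sum_le T g hg0
    have hstep3 : ∑ e ∈ T.image (fun q : V × V => s(q.1, q.2)), g e ≤ δ :=
      energy_finset_le μ m _ hedges (fun e he => (hμ _ (hedges e he)).le) hδ hE
    calc ∑ v ∈ A, ∑ w ∈ A, W v w * (F v - F w) ^ 2
        ≤ ∑ q ∈ T, 16 * g s(q.1, q.2) := hstep1
      _ = 16 * ∑ q ∈ T, g s(q.1, q.2) := by rw [Finset.mul_sum]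
      _ ≤ 16 * (2 * ∑ e ∈ T.image (fun q : V × V => s(q.1, q.2)), g e) := by linarith
      _ ≤ 32 * δ := by linarith
  calc μ s(a, b) * (h a - h b) ^ 2
      ≤ 2 * ∑ v ∈ A, ∑ w ∈ A, W v w * ((F v ^ 2 + F w ^ 2) / 2) * (h v - h w) ^ 2 := hlow
    _ ≤ 2 * (4 * M ^ 2 * ∑ v ∈ A, ∑ w ∈ A, W v w * (F v - F w) ^ 2) := by linarith
    _ ≤ 2 * (4 * M ^ 2 * (32 * δ)) := by nlinarith [sq_nonneg M, hDbound]
    _ = 256 * M ^ 2 * δ := by ring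

end Stmt9Aux

/-- In a connected recurrent network with positive edge conductances, every
bounded harmonic function is constant. -/
theorem stmt9 (G : SimpleGraph V) [G.LocallyFinite] [DecidableEq V]
    (hconn : G.Connected) (μ : Sym2 V → ℝ) (hμ : ∀ e ∈ G.edgeSet, 0 < μ e)
    (hrec : ∀ v₀ : V, condToInfty G μ v₀ = 0)
    (h : V → ℝ) (hbd : ∃ M, ∀ v, |h v| ≤ M)
    (hharm : ∀ v, ∑ w ∈ G.neighborFinset v, μ s(v, w) * (h w - h v) = 0) :
    ∀ u v, h u = h v := by
  classical
  obtain ⟨M, hM⟩ := hbd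
  have key : ∀ a b : V, G.Adj a b → h a = h b := by
    intro a b hab
    have hμab := hμ _ (G.mem_edgeSet.mpr hab)
    have hquad : ∀ ε : ℝ, 0 < ε → μ s(a, b) * (h a - h b) ^ 2 ≤ ε := by
      intro ε hε
      have hδ : (0:ℝ) < ε / (256 * M ^ 2 + 1) := by positivity
      have h0 := hrec a
      rw [condToInfty] at h0
      have hlt : (⨅ (m : Sym2 V → NNReal) (_ : ∀ p : ℕ → V, InfPath G a p →
          1 ≤ ∑' n, (m s(p n, p (n + 1)) : ℝ≥0∞)), eEnergy G μ m)
          < ENNReal.ofReal (ε / (256 * M ^ 2 + 1)) := by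
        rw [h0]; exact ENNReal.ofReal_pos.mpr hδ
      rw [iInf_lt_iff] at hlt
      obtain ⟨m, hm⟩ := hlt
      rw [iInf_lt_iff] at hm
      obtain ⟨hcon, hE⟩ := hm
      have hE' : (∑' e : G.edgeSet, ENNReal.ofReal (μ e) * ((m e : ℝ≥0∞)) ^ 2)
          ≤ ENNReal.ofReal (ε / (256 * M ^ 2 + 1)) := hE.le
      have hedge := Stmt9Aux.edge_step hconn μ hμ h M hM hharm a b hab m hcon hδ.le hE'
      calc μ s(a, b) * (h a - h b) ^ 2
          ≤ 256 * M ^ 2 * (ε / (256 * M ^ 2 + 1)) := hedge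
        _ ≤ ε := by
          have h1 : 256 * M ^ 2 * (ε / (256 * M ^ 2 + 1))
              ≤ (256 * M ^ 2 + 1) * (ε / (256 * M ^ 2 + 1)) :=
            mul_le_mul_of_nonneg_right (by linarith) hδ.le
          have h2 : (256 * M ^ 2 + 1) * (ε / (256 * M ^ 2 + 1)) = ε := by
            field_simp
          linarith
    by_contra hne
    have hd : h a - h b ≠ 0 := sub_ne_zero.mpr hne
    have h2 : (h a - h b) ^ 2 ≠ 0 := pow_ne_zero 2 hd
    have hpos : 0 < μ s(a, b) * (h a - h b) ^ 2 :=
      mul_pos hμab (lt_of_le_of_ne (sq_nonneg _) (Ne.symm h2))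
    have := hquad (μ s(a, b) * (h a - h b) ^ 2 / 2) (by positivity)
    linarith
  suffices hwalk : ∀ (c d : V) (q : G.Walk c d), h c = h d by
    intro u v
    obtain ⟨q⟩ := hconn.preconnected u v
    exact hwalk u v q
  intro c d q
  induction q with
  | nil => rfl
  | cons h' p ih => exact (key _ _ h').trans ih
end
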